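/- arXiv:2508.06002 — 8 statements merged into one kernel-verified Lean document; each statement's English description precedes it below -/
import Mathlib

section
/- Let n ≥ 1, H ∈ ℝ^{n×n} be symmetric positive definite, b ∈ ℝⁿ, and f(x) = (1/2)xᵀHx + bᵀx with gradient G(x) = Hx + b. Fix x_k ∈ ℝⁿ with G(x_k) ≠ 0 and α_k > 0, and set x_{k+1} = x_k − α_k G(x_k), s_k = x_{k+1} − x_k, y_k = G(x_{k+1}) − G(x_k). Then the long KGD step-size equals the long Barzilai–Borwein step: K1(x_{k+1}; x_k, α_k) = (s_kᵀ s_k)/(s_kᵀ y_k), where in particular s_kᵀ y_k > 0 and the denominator 2 + 2(f(x_{k+1}) − f(x_k))/(α_k ‖G(x_k)‖²) is nonzero. -/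
open scoped RealInnerProductSpace

/-! On a quadratic with Hessian `A`, the step `s = -α g` gives
`f(x + s) - f(x) = -α ‖g‖² + (α²/2) ⟪g, A g⟫`, so the KGD denominator equals
`α ⟪g, A g⟫ / ‖g‖²` and the KGD step is `‖g‖² / ⟪g, A g⟫`. Since `y = A s`, the long
Barzilai–Borwein quotient `⟪s, s⟫ / ⟪s, A s⟫` is the same Rayleigh-type quotient. -/

theorem Matrix.PosDef.inner_toEuclideanLin_self_pos {n : Type*} [Fintype n] [DecidableEq n]
    {H : Matrix n n ℝ} (hH : H.PosDef) {u : EuclideanSpace ℝ n} (hu : u ≠ 0) :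
    0 < ⟪u, Matrix.toEuclideanLin H u⟫ := by
  have := hH.dotProduct_mulVec_pos (x := WithLp.ofLp u) (by simpa using hu)
  simpa [EuclideanSpace.inner_eq_star_dotProduct, Matrix.toLpLin_apply,
    dotProduct_comm] using this

section Quadratic

variable {E : Type*} [NormedAddCommGroup E] [InnerProductSpace ℝ E]
  {A : E →ₗ[ℝ] E} {b : E} {f : E → ℝ}

theorem LinearMap.IsSymmetric.quadratic_add_sub (hA : A.IsSymmetric)
    (hf : ∀ x, f x = 1 / 2 * ⟪x, A x⟫ + ⟪b, x⟫) (x s : E) :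
    f (x + s) - f x = ⟪s, A x + b⟫ + 1 / 2 * ⟪s, A s⟫ := by
  have hxs : ⟪x, A s⟫ = ⟪s, A x⟫ := by rw [← hA, real_inner_comm]
  simp only [hf, map_add, inner_add_left, inner_add_right, hxs, real_inner_comm b]
  ring

theorem LinearMap.IsSymmetric.quadratic_sub_smul_grad_sub (hA : A.IsSymmetric)
    (hf : ∀ x, f x = 1 / 2 * ⟪x, A x⟫ + ⟪b, x⟫) (x : E) (α : ℝ) :
    f (x - α • (A x + b)) - f x
      = α ^ 2 / 2 * ⟪A x + b, A (A x + b)⟫ - α * ‖A x + b‖ ^ 2 := by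
  rw [sub_eq_add_neg x, hA.quadratic_add_sub hf]
  simp only [map_neg, map_smul, inner_neg_left, inner_neg_right, real_inner_smul_left,
    real_inner_smul_right, real_inner_self_eq_norm_sq]
  ring

theorem LinearMap.IsSymmetric.kgd_denominator_eq (hA : A.IsSymmetric)
    (hf : ∀ x, f x = 1 / 2 * ⟪x, A x⟫ + ⟪b, x⟫) (x : E) {α : ℝ} (hα : α ≠ 0)
    (hg : A x + b ≠ 0) :
    2 + 2 * (f (x - α • (A x + b)) - f x) / (α * ‖A x + b‖ ^ 2)
      = α * ⟪A x + b, A (A x + b)⟫ / ‖A x + b‖ ^ 2 := by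
  have hg2 : ‖A x + b‖ ^ 2 ≠ 0 := by positivity
  rw [hA.quadratic_sub_smul_grad_sub hf]
  field_simp
  ring

theorem inner_smul_map_smul (A : E →ₗ[ℝ] E) (c : ℝ) (g : E) :
    ⟪c • g, A (c • g)⟫ = c ^ 2 * ⟪g, A g⟫ := by
  simp only [map_smul, real_inner_smul_left, real_inner_smul_right]
  ring

end Quadratic

theorem stmt_0_general {n : ℕ}
    (H : Matrix (Fin n) (Fin n) ℝ) (hH : H.PosDef)
    (b : EuclideanSpace ℝ (Fin n))
    (f : EuclideanSpace ℝ (Fin n) → ℝ)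
    (hf : ∀ x, f x = (1 / 2) * ⟪x, Matrix.toEuclideanLin H x⟫ + ⟪b, x⟫)
    (G : EuclideanSpace ℝ (Fin n) → EuclideanSpace ℝ (Fin n))
    (hG : ∀ x, G x = Matrix.toEuclideanLin H x + b)
    (xk : EuclideanSpace ℝ (Fin n)) (hGk : G xk ≠ 0)
    (αk : ℝ) (hαk : 0 < αk)
    (xk1 sk yk : EuclideanSpace ℝ (Fin n))
    (hx : xk1 = xk - αk • G xk)
    (hs : sk = xk1 - xk) (hy : yk = G xk1 - G xk) :
    0 < ⟪sk, yk⟫ ∧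
      2 + 2 * (f xk1 - f xk) / (αk * ‖G xk‖ ^ 2) ≠ 0 ∧
      αk / (2 + 2 * (f xk1 - f xk) / (αk * ‖G xk‖ ^ 2)) = ⟪sk, sk⟫ / ⟪sk, yk⟫ := by
  set A := Matrix.toEuclideanLin H
  have hA : A.IsSymmetric := Matrix.isSymmetric_toEuclideanLin_iff.mpr hH.isHermitian
  have hP : 0 < ⟪G xk, A (G xk)⟫ := hH.inner_toEuclideanLin_self_pos hGk
  have hN : 0 < ‖G xk‖ ^ 2 := by positivity
  have hsk : sk = (-αk) • G xk := by rw [hs, hx, neg_smul]; abel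
  have hyk : yk = A sk := by rw [hy, hG, hG, hs, map_sub]; abel
  have hss : ⟪sk, sk⟫ = αk ^ 2 * ‖G xk‖ ^ 2 := by
    rw [hsk, real_inner_smul_left, real_inner_smul_right, real_inner_self_eq_norm_sq]; ring
  have hsy : ⟪sk, yk⟫ = αk ^ 2 * ⟪G xk, A (G xk)⟫ := by
    rw [hyk, hsk, inner_smul_map_smul, neg_sq]
  have hden : 2 + 2 * (f xk1 - f xk) / (αk * ‖G xk‖ ^ 2)
      = αk * ⟪G xk, A (G xk)⟫ / ‖G xk‖ ^ 2 := by
    have h := hA.kgd_denominator_eq hf xk hαk.ne' (hG xk ▸ hGk)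
    rwa [← hG, ← hx] at h
  refine ⟨by rw [hsy]; positivity, by rw [hden]; positivity, ?_⟩
  rw [hden, hss, hsy]
  field_simp

/-- For the strongly convex quadratic `f(x) = (1/2)xᵀHx + bᵀx` with gradient
`G(x) = Hx + b`, the long KGD step-size equals the long Barzilai–Borwein step. -/
theorem stmt_0 {n : ℕ} (hn : 1 ≤ n)
    (H : Matrix (Fin n) (Fin n) ℝ) (hH : H.PosDef)
    (b : EuclideanSpace ℝ (Fin n))
    (f : EuclideanSpace ℝ (Fin n) → ℝ)
    (hf : ∀ x, f x = (1 / 2) * ⟪x, Matrix.toEuclideanLin H x⟫ + ⟪b, x⟫)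
    (G : EuclideanSpace ℝ (Fin n) → EuclideanSpace ℝ (Fin n))
    (hG : ∀ x, G x = Matrix.toEuclideanLin H x + b)
    (xk : EuclideanSpace ℝ (Fin n)) (hGk : G xk ≠ 0)
    (αk : ℝ) (hαk : 0 < αk)
    (xk1 sk yk : EuclideanSpace ℝ (Fin n))
    (hx : xk1 = xk - αk • G xk)
    (hs : sk = xk1 - xk) (hy : yk = G xk1 - G xk) :
    0 < ⟪sk, yk⟫ ∧
      2 + 2 * (f xk1 - f xk) / (αk * ‖G xk‖ ^ 2) ≠ 0 ∧
      αk / (2 + 2 * (f xk1 - f xk) / (αk * ‖G xk‖ ^ 2)) = ⟪sk, sk⟫ / ⟪sk, yk⟫ :=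
  stmt_0_general H hH b f hf G hG xk hGk αk hαk xk1 sk yk hx hs hy
end

section
/- Let n ≥ 1, H ∈ ℝ^{n×n} be symmetric positive definite, b ∈ ℝⁿ, f(x) = (1/2)xᵀHx + bᵀx with gradient G(x) = Hx + b and unique minimizer x* = −H⁻¹b. Let x₀ ∈ ℝⁿ, α₀ > 0, and define x_{k+1} = x_k − α_k G(x_k) where for k ≥ 1 the step is the long Barzilai–Borwein step α_k = (s_{k−1}ᵀ s_{k−1})/(s_{k−1}ᵀ y_{k−1}) with s_{k−1} = x_k − x_{k−1}, y_{k−1} = G(x_k) − G(x_{k−1}). If G(x_k) ≠ 0 for all k (so the iteration is well defined), then x_k converges to x*. -/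
/-!
In an orthonormal eigenbasis of `H` the gradients `g k = H (x k - xs)` evolve coordinatewise by
`c (k + 1) i = (1 - α k * μ i) * c k i`, and the long Barzilai–Borwein step
`α (k + 1) = ‖g k‖² / ⟪g k, H (g k)⟫` is an inverse Rayleigh quotient, hence lies in
`[1 / μ_max, 1 / μ_min]`. We show `c k i → 0` by induction along the eigenvalues. Once every
coordinate with a smaller eigenvalue tends to zero, at each step either those coordinates carry at
most a third of `‖g k‖²`, and then `α (k + 1) * μ i ∈ [μ i / μ_max, 3 / 2]`, so the `i`-th
coordinate contracts by the factor `max (1 - μ i / μ_max) (1 / 2) < 1`; or they carry more, and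
then `c k i ^ 2` is at most three times their vanishing mass. A nonnegative sequence which at every
step either contracts or is dominated by a null sequence tends to zero. Finally `H` is invertible,
so `g k → 0` gives `x k → xs`.
-/

open scoped RealInnerProductSpace
open Filter Topology Finset

theorem tendsto_zero_of_le_max_mul {b r : ℕ → ℝ} {c : ℝ} (hb : ∀ k, 0 ≤ b k) (hc : c < 1)
    (hr : Tendsto r atTop (𝓝 0)) (hstep : ∀ k, b (k + 1) ≤ max (c * b k) (r k)) :
    Tendsto b atTop (𝓝 0) := by
  refine tendsto_order.2 ⟨fun a ha => .of_forall fun k => ha.trans_le (hb k), fun ε hε => ?_⟩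
  obtain ⟨N, hN⟩ := eventually_atTop.1 (hr.eventually (gt_mem_nhds hε))
  -- while `b` stays above `ε > r`, each step removes at least `(1 - c) ε`
  obtain ⟨k₀, hk₀N, hk₀⟩ : ∃ k ≥ N, b k < ε := by
    by_contra! hbig
    have hdec : ∀ j : ℕ, b (N + j) ≤ b N - j * ((1 - c) * ε) := by
      intro j
      induction j with
      | zero => simp
      | succ j ih =>
        have hbj := hbig (N + j) (by omega)
        have hcontr : b (N + j + 1) ≤ c * b (N + j) :=
          (le_max_iff.1 (hstep (N + j))).resolve_right fun h =>
            (h.trans_lt (hN _ (by omega))).not_ge (hbig _ (by omega))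
        rw [← add_assoc]
        push_cast
        nlinarith
    obtain ⟨j, hj⟩ := exists_nat_gt (b N / ((1 - c) * ε))
    rw [div_lt_iff₀ (mul_pos (by linarith) hε)] at hj
    linarith [hdec j, hb (N + j)]
  refine eventually_atTop.2 ⟨k₀, fun k hk => ?_⟩
  induction k, hk using Nat.le_induction with
  | base => exact hk₀
  | succ k hk ih =>
    have hcb : c * b k ≤ b k := by nlinarith [hb k]
    exact (hstep k).trans_lt (max_lt (hcb.trans_lt ih) (hN k (by omega)))

lemma tendsto_zero_of_tendsto_sq {f : ℕ → ℝ} (h : Tendsto (fun k => f k ^ 2) atTop (𝓝 0)) :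
    Tendsto f atTop (𝓝 0) := by
  have := (Real.continuous_sqrt.tendsto 0).comp h
  exact (tendsto_zero_iff_abs_tendsto_zero f).2
    (by simpa [Function.comp_def, Real.sqrt_sq_eq_abs] using this)

section Rayleigh

variable {ι : Type*} [Fintype ι] {μ : ι → ℝ}

noncomputable def invRayleigh (μ v : ι → ℝ) : ℝ := (∑ j, v j ^ 2) / ∑ j, μ j * v j ^ 2

lemma invRayleigh_mem_Icc {m M : ℝ} (hm : 0 < m) (hμ : ∀ j, μ j ∈ Set.Icc m M) {v : ι → ℝ}
    (hv : 0 < ∑ j, v j ^ 2) : invRayleigh μ v ∈ Set.Icc M⁻¹ m⁻¹ := by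
  have hmW : m * ∑ j, v j ^ 2 ≤ ∑ j, μ j * v j ^ 2 := by
    rw [mul_sum]; exact sum_le_sum fun j _ => by gcongr; exact (hμ j).1
  have hWM : ∑ j, μ j * v j ^ 2 ≤ M * ∑ j, v j ^ 2 := by
    rw [mul_sum]; exact sum_le_sum fun j _ => by gcongr; exact (hμ j).2
  have hW : 0 < ∑ j, μ j * v j ^ 2 := by nlinarith
  have hM : 0 < M := by nlinarith
  rw [invRayleigh, inv_eq_one_div, inv_eq_one_div, Set.mem_Icc,
    div_le_div_iff₀ hM hW, div_le_div_iff₀ hW hm]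
  constructor <;> linarith

lemma invRayleigh_mul_le_three_halves (hμ : ∀ j, 0 ≤ μ j) {v : ι → ℝ} {x : ℝ} (hx : 0 < x)
    (hv : 0 < ∑ j, v j ^ 2) (hlow : ∑ j with μ j < x, v j ^ 2 ≤ (∑ j, v j ^ 2) / 3) :
    invRayleigh μ v * x ≤ 3 / 2 := by
  have hsplit := sum_filter_add_sum_filter_not univ (fun j => μ j < x) fun j => v j ^ 2
  have hhigh : x * ∑ j with ¬ μ j < x, v j ^ 2 ≤ ∑ j, μ j * v j ^ 2 := calc
    x * ∑ j with ¬ μ j < x, v j ^ 2 ≤ ∑ j with ¬ μ j < x, μ j * v j ^ 2 := by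
      rw [mul_sum]
      exact sum_le_sum fun j hj => by gcongr; exact not_lt.1 (mem_filter.1 hj).2
    _ ≤ ∑ j, μ j * v j ^ 2 :=
      sum_le_sum_of_subset_of_nonneg (filter_subset _ _) fun j _ _ => by
        have := hμ j; positivity
  have hW : 0 < ∑ j, μ j * v j ^ 2 := by nlinarith
  rw [invRayleigh, div_mul_eq_mul_div, div_le_iff₀ hW]
  nlinarith

end Rayleigh

section Coordinates

variable {ι : Type*} [Fintype ι] {μ : ι → ℝ} {c : ℕ → ι → ℝ} {α : ℕ → ℝ}

lemma exists_coord_sq_le_max (hμ : ∀ j, 0 < μ j)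
    (hrec : ∀ k j, c (k + 1) j = (1 - α k * μ j) * c k j)
    (hc : ∀ k, 0 < ∑ j, c k j ^ 2) (hα : ∀ k, α (k + 1) = invRayleigh μ (c k)) (i : ι) :
    ∃ ρ < 1, ∃ C, ∀ k, c (k + 3) i ^ 2 ≤
      max (ρ * c (k + 2) i ^ 2) (C * ∑ j with μ j < μ i, c (k + 1) j ^ 2) := by
  have : Nonempty ι := ⟨i⟩
  obtain ⟨jm, hjm⟩ := Finite.exists_min μ
  obtain ⟨jM, hjM⟩ := Finite.exists_max μ
  set low : ℕ → ℝ := fun k => ∑ j with μ j < μ i, c k j ^ 2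
  set ρ := max (1 - μ i / μ jM) (1 / 2)
  set C := (1 + μ i / μ jm) ^ 2
  have hstep : ∀ k, α (k + 1) * μ i ∈ Set.Icc (μ i / μ jM) (μ i / μ jm) := by
    intro k
    have := (hμ i).le
    obtain ⟨hlo, hhi⟩ := invRayleigh_mem_Icc (hμ jm) (fun j => ⟨hjm j, hjM j⟩) (hc k)
    rw [hα k, div_eq_inv_mul, div_eq_inv_mul]
    exact ⟨by gcongr, by gcongr⟩
  have hρ : ρ ^ 2 < 1 := by
    have : ρ < 1 := max_lt (by linarith [div_pos (hμ i) (hμ jM)]) (by norm_num)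
    nlinarith [le_max_right (1 - μ i / μ jM) (1 / 2)]
  have hfac : ∀ k, (1 - α (k + 1) * μ i) ^ 2 ≤ C := by
    intro k
    obtain ⟨hlo, hhi⟩ := hstep k
    exact sq_le_sq' (by linarith) (by linarith [div_pos (hμ i) (hμ jM)])
  -- with little mass below `μ i`, the step `α (k + 1) * μ i` lies in `[μ i / μ jM, 3 / 2]`
  have hcontract : ∀ k, low k ≤ (∑ j, c k j ^ 2) / 3 → (1 - α (k + 1) * μ i) ^ 2 ≤ ρ ^ 2 := by
    intro k hk
    have h32 := invRayleigh_mul_le_three_halves (fun j => (hμ j).le) (hμ i) (hc k) hk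
    rw [← hα k] at h32
    exact sq_le_sq' (by linarith [le_max_right (1 - μ i / μ jM) (1 / 2)])
      (by linarith [le_max_left (1 - μ i / μ jM) (1 / 2), (hstep k).1])
  have hsq : ∀ k, c (k + 1) i ^ 2 = (1 - α k * μ i) ^ 2 * c k i ^ 2 := fun k => by
    rw [hrec, mul_pow]
  refine ⟨ρ ^ 2, hρ, 3 * C ^ 2, fun k => ?_⟩
  by_cases hk : low (k + 1) ≤ (∑ j, c (k + 1) j ^ 2) / 3
  · refine le_max_of_le_left ?_
    rw [hsq (k + 2)]
    exact mul_le_mul_of_nonneg_right (hcontract _ hk) (sq_nonneg _)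
  · refine le_max_of_le_right ?_
    have hci : c (k + 1) i ^ 2 ≤ ∑ j, c (k + 1) j ^ 2 :=
      single_le_sum (fun j _ => sq_nonneg (c (k + 1) j)) (mem_univ i)
    have hC : 0 ≤ C := sq_nonneg _
    calc c (k + 3) i ^ 2
        = (1 - α (k + 2) * μ i) ^ 2 * ((1 - α (k + 1) * μ i) ^ 2 * c (k + 1) i ^ 2) := by
          rw [hsq (k + 2), hsq (k + 1)]
      _ ≤ C * (C * ∑ j, c (k + 1) j ^ 2) := by
          gcongr
          exacts [hfac _, hfac _]
      _ ≤ 3 * C ^ 2 * low (k + 1) := by nlinarith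

theorem tendsto_coord_zero_of_lower (hμ : ∀ j, 0 < μ j)
    (hrec : ∀ k j, c (k + 1) j = (1 - α k * μ j) * c k j)
    (hc : ∀ k, 0 < ∑ j, c k j ^ 2) (hα : ∀ k, α (k + 1) = invRayleigh μ (c k)) (i : ι)
    (hlower : ∀ j, μ j < μ i → Tendsto (fun k => c k j) atTop (𝓝 0)) :
    Tendsto (fun k => c k i) atTop (𝓝 0) := by
  obtain ⟨ρ, hρ, C, hmax⟩ := exists_coord_sq_le_max hμ hrec hc hα i
  have hlow : Tendsto (fun k => ∑ j with μ j < μ i, c k j ^ 2) atTop (𝓝 0) := by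
    simpa using tendsto_finsetSum _ fun j hj => (hlower j (mem_filter.1 hj).2).pow 2
  have hlow' : Tendsto (fun k => C * ∑ j with μ j < μ i, c (k + 1) j ^ 2) atTop (𝓝 0) := by
    simpa using (hlow.comp (tendsto_add_atTop_nat 1)).const_mul C
  have := tendsto_zero_of_le_max_mul (b := fun k => c (k + 2) i ^ 2) (fun _ => sq_nonneg _)
    hρ hlow' hmax
  exact tendsto_zero_of_tendsto_sq ((tendsto_add_atTop_iff_nat 2).1 this)

theorem tendsto_coord_zero (hμ : ∀ j, 0 < μ j)
    (hrec : ∀ k j, c (k + 1) j = (1 - α k * μ j) * c k j)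
    (hc : ∀ k, 0 < ∑ j, c k j ^ 2) (hα : ∀ k, α (k + 1) = invRayleigh μ (c k)) (i : ι) :
    Tendsto (fun k => c k i) atTop (𝓝 0) :=
  (Finite.wellFounded_of_trans_of_irrefl (fun j i => μ j < μ i)).induction i
    fun i ih => tendsto_coord_zero_of_lower hμ hrec hc hα i ih

end Coordinates

section Operator

variable {E : Type*} [NormedAddCommGroup E] [InnerProductSpace ℝ E] {T : E →ₗ[ℝ] E}

lemma inner_smul_div_inner_smul_apply (T : E →ₗ[ℝ] E) {a : ℝ} (ha : a ≠ 0) (v : E) :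
    ⟪a • v, a • v⟫ / ⟪a • v, T (a • v)⟫ = ⟪v, v⟫ / ⟪v, T v⟫ := by
  simp only [map_smul, real_inner_smul_left, real_inner_smul_right, ← mul_assoc]
  exact mul_div_mul_left _ _ (mul_ne_zero ha ha)

lemma ker_eq_bot_of_inner_apply_pos (hT : ∀ v ≠ 0, 0 < ⟪v, T v⟫) : LinearMap.ker T = ⊥ :=
  LinearMap.ker_eq_bot'.2 fun v hv => by_contra fun hne => by simpa [hv] using hT v hne

variable [FiniteDimensional ℝ E]

theorem tendsto_longBB_gradient_zero (hT : T.IsSymmetric) (hTpos : ∀ v ≠ 0, 0 < ⟪v, T v⟫)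
    {g : ℕ → E} {α : ℕ → ℝ} (hg : ∀ k, g k ≠ 0) (hrec : ∀ k, g (k + 1) = g k - α k • T (g k))
    (hα : ∀ k, α (k + 1) = ⟪g k, g k⟫ / ⟪g k, T (g k)⟫) : Tendsto g atTop (𝓝 0) := by
  set B := hT.eigenvectorBasis rfl
  set μ := hT.eigenvalues rfl
  set c : ℕ → Fin _ → ℝ := fun k => B.repr (g k)
  have hμ : ∀ i, 0 < μ i := by
    intro i
    have h := hTpos (B i) (B.orthonormal.ne_zero i)
    rwa [hT.apply_eigenvectorBasis, real_inner_smul_right, real_inner_self_eq_norm_sq,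
      B.orthonormal.1 i, one_pow, mul_one] at h
  have hdiag : ∀ v i, B.repr (T v) i = μ i * B.repr v i := hT.eigenvectorBasis_apply_self_apply rfl
  have hinner : ∀ v w : E, ⟪v, w⟫ = ∑ i, B.repr v i * B.repr w i := fun v w => by
    simp only [B.repr_apply_apply, ← B.sum_inner_mul_inner v w, real_inner_comm v]
  have hcrec : ∀ k i, c (k + 1) i = (1 - α k * μ i) * c k i := by
    intro k i
    simp only [c, hrec, map_sub, map_smul, PiLp.sub_apply, PiLp.smul_apply, smul_eq_mul, hdiag]
    ring
  have hS : ∀ k, ⟪g k, g k⟫ = ∑ i, c k i ^ 2 := fun k => by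
    simp only [hinner, c, sq]
  have hW : ∀ k, ⟪g k, T (g k)⟫ = ∑ i, μ i * c k i ^ 2 := fun k => by
    simp only [hinner, c, hdiag]
    exact sum_congr rfl fun i _ => by ring
  have hc : ∀ k, 0 < ∑ i, c k i ^ 2 := fun k => hS k ▸ real_inner_self_pos.2 (hg k)
  have hcα : ∀ k, α (k + 1) = invRayleigh μ (c k) := fun k => by rw [hα, hS, hW, invRayleigh]
  have hsum : Tendsto (fun k => ∑ i, c k i • B i) atTop (𝓝 0) := by
    simpa using tendsto_finsetSum univ fun i _ =>
      (tendsto_coord_zero hμ hcrec hc hcα i).smul_const (B i)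
  simpa only [c, B.sum_repr] using hsum

theorem tendsto_longBB (hT : T.IsSymmetric) (hTpos : ∀ v ≠ 0, 0 < ⟪v, T v⟫)
    {xs : E} {x : ℕ → E} {α : ℕ → ℝ} (hα0 : α 0 ≠ 0) (hgrad : ∀ k, T (x k - xs) ≠ 0)
    (hstep : ∀ k, x (k + 1) = x k - α k • T (x k - xs))
    (hBB : ∀ k, α (k + 1) =
      ⟪x (k + 1) - x k, x (k + 1) - x k⟫ / ⟪x (k + 1) - x k, T (x (k + 1) - x k)⟫) :
    Tendsto x atTop (𝓝 xs) := by
  set g : ℕ → E := fun k => T (x k - xs)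
  have hs : ∀ k, x (k + 1) - x k = (-α k) • g k := fun k => by
    rw [hstep, neg_smul, sub_sub_cancel_left]
  have hgrec : ∀ k, g (k + 1) = g k - α k • T (g k) := fun k => by
    simp only [g, hstep, map_sub, map_smul]
    abel
  have hαne : ∀ k, α k ≠ 0 := by
    intro k
    induction k with
    | zero => exact hα0
    | succ k ih =>
      have hsne : x (k + 1) - x k ≠ 0 := by
        rw [hs]; exact smul_ne_zero (neg_ne_zero.2 ih) (hgrad k)
      rw [hBB]
      exact (div_pos (real_inner_self_pos.2 hsne) (hTpos _ hsne)).ne'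
  have hgα : ∀ k, α (k + 1) = ⟪g k, g k⟫ / ⟪g k, T (g k)⟫ := fun k => by
    rw [hBB, hs, inner_smul_div_inner_smul_apply T (neg_ne_zero.2 (hαne k))]
  have hg := tendsto_longBB_gradient_zero hT hTpos hgrad hgrec hgα
  rw [← tendsto_sub_nhds_zero_iff,
    (T.isClosedEmbedding_of_injective (ker_eq_bot_of_inner_apply_pos hTpos)).tendsto_nhds_iff,
    map_zero]
  exact hg

end Operator

theorem stmt_2_general {n : ℕ}
    (H : Matrix (Fin n) (Fin n) ℝ) (hH : H.PosDef)
    (b : EuclideanSpace ℝ (Fin n))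
    (G : EuclideanSpace ℝ (Fin n) → EuclideanSpace ℝ (Fin n))
    (hG : ∀ x, G x = Matrix.toEuclideanLin H x + b)
    (xs : EuclideanSpace ℝ (Fin n)) (hxs : Matrix.toEuclideanLin H xs = -b)
    (x : ℕ → EuclideanSpace ℝ (Fin n)) (α : ℕ → ℝ)
    (hα0 : 0 < α 0)
    (hGk : ∀ k, G (x k) ≠ 0)
    (hstep : ∀ k, x (k + 1) = x k - α k • G (x k))
    (hBB : ∀ k, α (k + 1) =
      ⟪x (k + 1) - x k, x (k + 1) - x k⟫ / ⟪x (k + 1) - x k, G (x (k + 1)) - G (x k)⟫) :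
    Tendsto x atTop (nhds xs) := by
  set T := Matrix.toEuclideanLin H
  have hGT : ∀ v, G v = T (v - xs) := fun v => by rw [hG, map_sub, hxs, sub_neg_eq_add]
  have hTpos : ∀ v ≠ 0, 0 < ⟪v, T v⟫ := fun v hv => by
    simpa [T, EuclideanSpace.inner_eq_star_dotProduct, dotProduct_comm]
      using hH.dotProduct_mulVec_pos (x := v.ofLp) (by simpa using hv)
  refine tendsto_longBB (Matrix.isSymmetric_toEuclideanLin_iff.2 hH.isHermitian)
    hTpos hα0.ne' (fun k => hGT (x k) ▸ hGk k) (fun k => hGT (x k) ▸ hstep k) fun k => ?_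
  rw [hBB, hGT, hGT, ← map_sub, sub_sub_sub_cancel_right]

/-- Global convergence of the long Barzilai–Borwein gradient method on a
strongly convex quadratic `f(x) = (1/2)xᵀHx + bᵀx`, with gradient `G(x) = Hx + b` and
unique minimizer `x* = -H⁻¹b` (characterized by `Hx* = -b`). -/
theorem stmt_2 {n : ℕ} (hn : 1 ≤ n)
    (H : Matrix (Fin n) (Fin n) ℝ) (hH : H.PosDef)
    (b : EuclideanSpace ℝ (Fin n))
    (f : EuclideanSpace ℝ (Fin n) → ℝ)
    (hf : ∀ x, f x = (1 / 2) * ⟪x, Matrix.toEuclideanLin H x⟫ + ⟪b, x⟫)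
    (G : EuclideanSpace ℝ (Fin n) → EuclideanSpace ℝ (Fin n))
    (hG : ∀ x, G x = Matrix.toEuclideanLin H x + b)
    (xs : EuclideanSpace ℝ (Fin n)) (hxs : Matrix.toEuclideanLin H xs = -b)
    (x : ℕ → EuclideanSpace ℝ (Fin n)) (α : ℕ → ℝ)
    (hα0 : 0 < α 0)
    (hGk : ∀ k, G (x k) ≠ 0)
    (hstep : ∀ k, x (k + 1) = x k - α k • G (x k))
    (hBB : ∀ k, α (k + 1) =
      ⟪x (k + 1) - x k, x (k + 1) - x k⟫ / ⟪x (k + 1) - x k, G (x (k + 1)) - G (x k)⟫) :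
    Tendsto x atTop (nhds xs) :=
  stmt_2_general H hH b G hG xs hxs x α hα0 hGk hstep hBB
end

section
/- Let n ≥ 1, H ∈ ℝ^{n×n} be symmetric positive definite, b ∈ ℝⁿ, f(x) = (1/2)xᵀHx + bᵀx with gradient G(x) = Hx + b, unique minimizer x* = −H⁻¹b, and condition number κ = λ_max(H)/λ_min(H). Let x₀ ∈ ℝⁿ, α₀ > 0, and define x_{k+1} = x_k − α_k G(x_k) where for k ≥ 1 the step is the long Barzilai–Borwein step α_k = (s_{k−1}ᵀ s_{k−1})/(s_{k−1}ᵀ y_{k−1}) with s_{k−1} = x_k − x_{k−1}, y_{k−1} = G(x_k) − G(x_{k−1}). If G(x_k) ≠ 0 for all k, then the convergence is at least R-linear with rate 1 − 1/κ: there exists a constant C > 0 such that ‖x_k − x*‖ ≤ C (1 − 1/κ)^k for all k ≥ 0. -/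
/-!
In an eigenbasis of `H` the gradient coordinates evolve as `c_{k+1,i} = (1 - α_k λ_i) c_{k,i}`,
and the long BB step `α_{k+1}` is the inverse of a Rayleigh quotient of `c_k`, so
`α_{k+1} λ_i ∈ [1/κ, κ]`: every factor `1 - α_{k+1} λ_i` is at most `θ = 1 - 1/κ` and at most
`κ - 1` in absolute value. If moreover the coordinates with eigenvalues below `λ_i` carry at most
the fraction `θ / (1 + θ)` of `‖c_k‖²`, then `α_{k+1} λ_i ≤ 1 + θ` and the `i`-th factor is at
most `θ` in absolute value. So, by induction on `λ_i`, at each step either `c_{k+2,i}` contracts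
at rate `θ`, or the whole gradient `c_k` is dominated by the smaller coordinates, which already
decay like `θ^k`, and two factors of size at most `κ - 1` keep `c_{k+2,i} = O(θ^k)`.
Finally `λ_min ‖x_k - x*‖ ≤ ‖H (x_k - x*)‖ = ‖G(x_k)‖`.
-/

open scoped RealInnerProductSpace

open Finset

section RLinear

variable {u : ℕ → ℝ} {ρ : ℝ}

lemma exists_le_mul_pow_of_forall_ge (hρ : 0 < ρ) {k₀ : ℕ} {C : ℝ}
    (h : ∀ k ≥ k₀, u k ≤ C * ρ ^ k) : ∃ C' > 0, ∀ k, u k ≤ C' * ρ ^ k := by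
  set S := ∑ j ∈ range k₀, |u j| / ρ ^ j
  refine ⟨max 1 (max C S), by positivity, fun k => ?_⟩
  rcases lt_or_ge k k₀ with hk | hk
  · have hS : |u k| / ρ ^ k ≤ S :=
      single_le_sum (f := fun j => |u j| / ρ ^ j) (fun j _ => by positivity) (mem_range.2 hk)
    calc u k ≤ |u k| / ρ ^ k * ρ ^ k := by
          rw [div_mul_cancel₀ _ (by positivity)]; exact le_abs_self _
      _ ≤ max 1 (max C S) * ρ ^ k := by
        gcongr; exact le_max_of_le_right (le_max_of_le_right hS)
  · calc u k ≤ C * ρ ^ k := h k hk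
      _ ≤ max 1 (max C S) * ρ ^ k := by gcongr; exact le_max_of_le_right (le_max_left _ _)

lemma exists_le_mul_pow_of_le_max (hρ : 0 < ρ) {k₀ : ℕ} {M : ℝ}
    (h : ∀ k ≥ k₀, u (k + 1) ≤ max (ρ * u k) (M * ρ ^ (k + 1))) :
    ∃ C > 0, ∀ k, u k ≤ C * ρ ^ k := by
  set C := max (u k₀ / ρ ^ k₀) M
  refine exists_le_mul_pow_of_forall_ge hρ (k₀ := k₀) (C := C) fun k (hk : k₀ ≤ k) => ?_
  induction k, hk using Nat.le_induction with
  | base => rw [← div_le_iff₀ (by positivity)]; exact le_max_left _ _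
  | succ k hk ih =>
    refine (h k hk).trans (max_le ?_ ?_)
    · rw [pow_succ]; nlinarith
    · gcongr; exact le_max_right _ _

end RLinear

lemma one_sub_div_le_div_sub_one {a b : ℝ} (ha : 0 < a) (hb : 0 < b) : 1 - a / b ≤ b / a - 1 := by
  rw [div_sub_one ha.ne', one_sub_div hb.ne', div_le_div_iff₀ hb ha]
  nlinarith [sq_nonneg (a - b)]

noncomputable def bbStep {ι : Type*} [Fintype ι] (lam c : ι → ℝ) : ℝ :=
  (∑ i, c i ^ 2) / ∑ i, lam i * c i ^ 2

section BBStep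

variable {ι : Type*} [Fintype ι] {lam c : ι → ℝ} {lmin lmax : ℝ}

lemma sum_sq_pos_of_ne_zero (hc : c ≠ 0) : 0 < ∑ i, c i ^ 2 := by
  obtain ⟨i, hi : c i ≠ 0⟩ := Function.ne_iff.1 hc
  exact sum_pos' (fun j _ => sq_nonneg _) ⟨i, mem_univ i, by positivity⟩

lemma mul_sum_sq_le_sum_mul_sq (hml : ∀ i, lmin ≤ lam i) :
    lmin * ∑ i, c i ^ 2 ≤ ∑ i, lam i * c i ^ 2 := by
  rw [mul_sum]
  exact sum_le_sum fun i _ => mul_le_mul_of_nonneg_right (hml i) (sq_nonneg _)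

lemma sum_mul_sq_le_mul_sum_sq (hmu : ∀ i, lam i ≤ lmax) :
    ∑ i, lam i * c i ^ 2 ≤ lmax * ∑ i, c i ^ 2 := by
  rw [mul_sum]
  exact sum_le_sum fun i _ => mul_le_mul_of_nonneg_right (hmu i) (sq_nonneg _)

lemma sum_mul_sq_pos (hpos : ∀ i, 0 < lam i) (hc : c ≠ 0) : 0 < ∑ i, lam i * c i ^ 2 := by
  obtain ⟨i, hi : c i ≠ 0⟩ := Function.ne_iff.1 hc
  exact sum_pos' (fun j _ => mul_nonneg (hpos j).le (sq_nonneg _))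
    ⟨i, mem_univ i, mul_pos (hpos i) (by positivity)⟩

lemma div_le_bbStep_mul (hml : ∀ i, lmin ≤ lam i) (hmu : ∀ i, lam i ≤ lmax) (h0 : 0 < lmin)
    (hc : c ≠ 0) (i : ι) : lmin / lmax ≤ bbStep lam c * lam i := by
  have hmax : 0 < lmax := h0.trans_le ((hml i).trans (hmu i))
  rw [bbStep, div_mul_eq_mul_div, le_div_iff₀ (sum_mul_sq_pos (fun j => h0.trans_le (hml j)) hc),
    div_mul_eq_mul_div, div_le_iff₀ hmax]
  calc lmin * ∑ j, lam j * c j ^ 2 ≤ lmin * (lmax * ∑ j, c j ^ 2) :=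
        mul_le_mul_of_nonneg_left (sum_mul_sq_le_mul_sum_sq hmu) h0.le
    _ ≤ (∑ j, c j ^ 2) * lam i * lmax := by
        nlinarith [mul_nonneg (mul_nonneg (sum_sq_pos_of_ne_zero hc).le (sub_nonneg.2 (hml i)))
          hmax.le]

lemma bbStep_mul_le_div (hml : ∀ i, lmin ≤ lam i) (hmu : ∀ i, lam i ≤ lmax) (h0 : 0 < lmin)
    (hc : c ≠ 0) (i : ι) : bbStep lam c * lam i ≤ lmax / lmin := by
  rw [bbStep, div_mul_eq_mul_div,
    div_le_div_iff₀ (sum_mul_sq_pos (fun j => h0.trans_le (hml j)) hc) h0]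
  calc (∑ j, c j ^ 2) * lam i * lmin ≤ lmax * (lmin * ∑ j, c j ^ 2) := by
        nlinarith [mul_nonneg (mul_nonneg (sum_sq_pos_of_ne_zero hc).le (sub_nonneg.2 (hmu i)))
          h0.le]
    _ ≤ lmax * ∑ j, lam j * c j ^ 2 :=
        mul_le_mul_of_nonneg_left (mul_sum_sq_le_sum_mul_sq hml)
          (h0.le.trans ((hml i).trans (hmu i)))

lemma bbStep_mul_le_one_add (hpos : ∀ j, 0 < lam j) (hc : c ≠ 0) {t : ℝ} (ht : 0 ≤ t) {i : ι}
    (hmass : (1 + t) * ∑ j with lam j < lam i, c j ^ 2 ≤ t * ∑ j, c j ^ 2) :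
    bbStep lam c * lam i ≤ 1 + t := by
  have hsplit := sum_filter_add_sum_filter_not univ (fun j => lam j < lam i) fun j => c j ^ 2
  have hupper : lam i * ∑ j with ¬lam j < lam i, c j ^ 2 ≤ ∑ j, lam j * c j ^ 2 := by
    rw [mul_sum]
    calc ∑ j with ¬lam j < lam i, lam i * c j ^ 2
        ≤ ∑ j with ¬lam j < lam i, lam j * c j ^ 2 :=
          sum_le_sum fun j hj => mul_le_mul_of_nonneg_right
            (not_lt.1 (mem_filter.1 hj).2) (sq_nonneg _)
      _ ≤ ∑ j, lam j * c j ^ 2 :=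
          sum_le_sum_of_subset_of_nonneg (filter_subset _ _)
            fun j _ _ => mul_nonneg (hpos j).le (sq_nonneg _)
  rw [bbStep, div_mul_eq_mul_div, div_le_iff₀ (sum_mul_sq_pos hpos hc)]
  have hN : ∑ j, c j ^ 2 ≤ (1 + t) * ∑ j with ¬lam j < lam i, c j ^ 2 := by
    linear_combination hmass - (1 + t) * hsplit
  nlinarith [mul_le_mul_of_nonneg_right hN (hpos i).le]

lemma abs_one_sub_bbStep_mul_le (hml : ∀ i, lmin ≤ lam i) (hmu : ∀ i, lam i ≤ lmax)
    (h0 : 0 < lmin) (hc : c ≠ 0) (i : ι) : |1 - bbStep lam c * lam i| ≤ lmax / lmin - 1 := by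
  have hmax : 0 < lmax := h0.trans_le ((hml i).trans (hmu i))
  rw [abs_le]
  constructor
  · linarith [bbStep_mul_le_div hml hmu h0 hc i]
  · linarith [div_le_bbStep_mul hml hmu h0 hc i, one_sub_div_le_div_sub_one h0 hmax]

lemma abs_one_sub_bbStep_mul_le_of_mass (hml : ∀ i, lmin ≤ lam i) (hmu : ∀ i, lam i ≤ lmax)
    (h0 : 0 < lmin) (hc : c ≠ 0) {i : ι}
    (hmass : (1 + (1 - lmin / lmax)) * ∑ j with lam j < lam i, c j ^ 2 ≤
      (1 - lmin / lmax) * ∑ j, c j ^ 2) :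
    |1 - bbStep lam c * lam i| ≤ 1 - lmin / lmax := by
  have hmax : 0 < lmax := h0.trans_le ((hml i).trans (hmu i))
  have hθ : 0 ≤ 1 - lmin / lmax := sub_nonneg.2 ((div_le_one hmax).2 ((hml i).trans (hmu i)))
  rw [abs_le]
  constructor
  · linarith [bbStep_mul_le_one_add (fun j => h0.trans_le (hml j)) hc hθ hmass]
  · linarith [div_le_bbStep_mul hml hmu h0 hc i]

end BBStep

/-- `c k` are the coordinates of the gradient at step `k` in an eigenbasis of the Hessian, with
eigenvalues `lam`, and `a k` is the step size. -/
structure IsBBSeq {ι : Type*} [Fintype ι] (lam : ι → ℝ) (c : ℕ → ι → ℝ) (a : ℕ → ℝ) : Prop where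
  succ_apply : ∀ k i, c (k + 1) i = (1 - a k * lam i) * c k i
  step_succ : ∀ k, a (k + 1) = bbStep lam (c k)

namespace IsBBSeq

variable {ι : Type*} [Fintype ι] {lam : ι → ℝ} {c : ℕ → ι → ℝ} {a : ℕ → ℝ} {lmin lmax : ℝ}

-- If `lmin = lmax`, the step `a 1 = 1 / lmin` annihilates `c 2`.
lemma lt_of_forall_ne_zero (h : IsBBSeq lam c a) (hml : ∀ i, lmin ≤ lam i)
    (hmu : ∀ i, lam i ≤ lmax) (h0 : 0 < lmin) (hc : ∀ k, c k ≠ 0) : lmin < lmax := by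
  by_contra! hle
  apply hc 2
  funext i
  have hlower := div_le_bbStep_mul hml hmu h0 (hc 0) i
  have hupper := bbStep_mul_le_div hml hmu h0 (hc 0) i
  obtain rfl : lmin = lmax := le_antisymm ((hml i).trans (hmu i)) hle
  rw [div_self h0.ne'] at hlower hupper
  rw [h.succ_apply, h.step_succ, le_antisymm hupper hlower, sub_self, zero_mul, Pi.zero_apply]

lemma sq_le (h : IsBBSeq lam c a) (hml : ∀ i, lmin ≤ lam i) (hmu : ∀ i, lam i ≤ lmax)
    (h0 : 0 < lmin) {k : ℕ} (hc : c k ≠ 0) (i : ι) :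
    c (k + 2) i ^ 2 ≤ (lmax / lmin - 1) ^ 2 * c (k + 1) i ^ 2 := by
  rw [h.succ_apply (k + 1), h.step_succ, mul_pow]
  exact mul_le_mul_of_nonneg_right
    (sq_le_sq.2 ((abs_one_sub_bbStep_mul_le hml hmu h0 hc i).trans (le_abs_self _))) (sq_nonneg _)

lemma sq_le_of_mass (h : IsBBSeq lam c a) (hml : ∀ i, lmin ≤ lam i) (hmu : ∀ i, lam i ≤ lmax)
    (h0 : 0 < lmin) {k : ℕ} (hc : c k ≠ 0) {i : ι}
    (hmass : (1 + (1 - lmin / lmax)) * ∑ j with lam j < lam i, c k j ^ 2 ≤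
      (1 - lmin / lmax) * ∑ j, c k j ^ 2) :
    c (k + 2) i ^ 2 ≤ (1 - lmin / lmax) ^ 2 * c (k + 1) i ^ 2 := by
  rw [h.succ_apply (k + 1), h.step_succ, mul_pow]
  exact mul_le_mul_of_nonneg_right (sq_le_sq.2
    ((abs_one_sub_bbStep_mul_le_of_mass hml hmu h0 hc hmass).trans (le_abs_self _))) (sq_nonneg _)

lemma exists_sq_le_of_forall_lt (h : IsBBSeq lam c a) (hml : ∀ i, lmin ≤ lam i)
    (hmu : ∀ i, lam i ≤ lmax) (h0 : 0 < lmin) (hc : ∀ k, c k ≠ 0) (i : ι)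
    (hlow : ∀ j, lam j < lam i → ∃ C, ∀ k, c k j ^ 2 ≤ C * ((1 - lmin / lmax) ^ 2) ^ k) :
    ∃ C > 0, ∀ k, c k i ^ 2 ≤ C * ((1 - lmin / lmax) ^ 2) ^ k := by
  set θ := 1 - lmin / lmax
  set K := lmax / lmin - 1
  have hlt := h.lt_of_forall_ne_zero hml hmu h0 hc
  have hθ : 0 < θ := sub_pos.2 ((div_lt_one (h0.trans hlt)).2 hlt)
  choose! C hC using hlow
  set S := ∑ j with lam j < lam i, C j
  have hlower : ∀ k, ∑ j with lam j < lam i, c k j ^ 2 ≤ S * (θ ^ 2) ^ k := fun k => by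
    rw [sum_mul]
    exact sum_le_sum fun j hj => hC j (mem_filter.1 hj).2 k
  refine exists_le_mul_pow_of_le_max (u := fun k => c k i ^ 2) (k₀ := 2)
    (M := K ^ 4 * ((1 + θ) / θ * S) / (θ ^ 2) ^ 2) (by positivity) fun k hk => ?_
  obtain ⟨m, rfl⟩ : ∃ m, k = m + 2 := ⟨k - 2, by omega⟩
  by_cases hmass : (1 + θ) * ∑ j with lam j < lam i, c (m + 1) j ^ 2 ≤ θ * ∑ j, c (m + 1) j ^ 2
  · exact le_max_of_le_left (h.sq_le_of_mass hml hmu h0 (hc (m + 1)) hmass)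
  · -- the gradient is already dominated by the components that converge at rate `θ`
    have hnorm : ∑ j, c (m + 1) j ^ 2 ≤ (1 + θ) / θ * S * (θ ^ 2) ^ (m + 1) := by
      rw [div_mul_eq_mul_div, div_mul_eq_mul_div, le_div_iff₀ hθ]
      nlinarith [hlower (m + 1)]
    refine le_max_of_le_right ?_
    calc c (m + 3) i ^ 2 ≤ K ^ 2 * c (m + 2) i ^ 2 := h.sq_le hml hmu h0 (hc (m + 1)) i
      _ ≤ K ^ 2 * (K ^ 2 * c (m + 1) i ^ 2) := by gcongr; exact h.sq_le hml hmu h0 (hc m) i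
      _ ≤ K ^ 2 * (K ^ 2 * ∑ j, c (m + 1) j ^ 2) := by
          gcongr
          exact single_le_sum (f := fun j => c (m + 1) j ^ 2) (fun j _ => sq_nonneg _) (mem_univ i)
      _ ≤ K ^ 2 * (K ^ 2 * ((1 + θ) / θ * S * (θ ^ 2) ^ (m + 1))) := by gcongr
      _ = K ^ 4 * ((1 + θ) / θ * S) / (θ ^ 2) ^ 2 * (θ ^ 2) ^ (m + 2 + 1) := by
          field_simp
          ring

lemma exists_sum_sq_le (h : IsBBSeq lam c a) (hml : ∀ i, lmin ≤ lam i)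
    (hmu : ∀ i, lam i ≤ lmax) (h0 : 0 < lmin) (hc : ∀ k, c k ≠ 0) :
    ∃ C > 0, ∀ k, ∑ i, c k i ^ 2 ≤ C * ((1 - lmin / lmax) ^ 2) ^ k := by
  have hcoord (i : ι) : ∃ C > 0, ∀ k, c k i ^ 2 ≤ C * ((1 - lmin / lmax) ^ 2) ^ k :=
    (Finite.wellFounded_of_trans_of_irrefl fun i j : ι => lam i < lam j).induction i
      fun i ih => h.exists_sq_le_of_forall_lt hml hmu h0 hc i fun j hj =>
        (ih j hj).imp fun _ hC => hC.2
  choose C hCpos hC using hcoord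
  obtain ⟨i, -⟩ := Function.ne_iff.1 (hc 0)
  refine ⟨∑ i, C i, sum_pos (fun i _ => hCpos i) ⟨i, mem_univ i⟩, fun k => ?_⟩
  rw [sum_mul]
  exact sum_le_sum fun i _ => hC i k

end IsBBSeq

section Gradient

variable {E : Type*} [NormedAddCommGroup E] [InnerProductSpace ℝ E] {T : E →ₗ[ℝ] E} {b : E}
  {G : E → E} {x : ℕ → E} {α : ℕ → ℝ}

lemma grad_succ_eq (hG : ∀ y, G y = T y + b) (hstep : ∀ k, x (k + 1) = x k - α k • G (x k))
    (k : ℕ) : G (x (k + 1)) = G (x k) - α k • T (G (x k)) := by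
  rw [hG (x (k + 1)), hstep k, map_sub, map_smul, hG (x k), map_add]
  module

lemma stepsize_succ_eq_inner_div (hT : ∀ v ≠ 0, 0 < ⟪v, T v⟫) (hG : ∀ y, G y = T y + b)
    (hstep : ∀ k, x (k + 1) = x k - α k • G (x k))
    (hBB : ∀ k, α (k + 1) =
      ⟪x (k + 1) - x k, x (k + 1) - x k⟫ / ⟪x (k + 1) - x k, G (x (k + 1)) - G (x k)⟫)
    (hα0 : 0 < α 0) (hGk : ∀ k, G (x k) ≠ 0) (k : ℕ) :
    α (k + 1) = ⟪G (x k), G (x k)⟫ / ⟪G (x k), T (G (x k))⟫ := by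
  have hratio (k : ℕ) (hk : α k ≠ 0) :
      α (k + 1) = ⟪G (x k), G (x k)⟫ / ⟪G (x k), T (G (x k))⟫ := by
    have hs : x (k + 1) - x k = (-α k) • G (x k) := by rw [hstep k, neg_smul]; abel
    have hy : G (x (k + 1)) - G (x k) = T (x (k + 1) - x k) := by
      rw [hG, hG, map_sub]; abel
    rw [hBB k, hy, hs, map_smul, real_inner_smul_left, real_inner_smul_right,
      real_inner_smul_left, real_inner_smul_right, ← mul_assoc, ← mul_assoc,
      mul_div_mul_left _ _ (mul_ne_zero (neg_ne_zero.2 hk) (neg_ne_zero.2 hk))]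
  have hpos (k : ℕ) : 0 < α k := by
    induction k with
    | zero => exact hα0
    | succ k ih =>
      rw [hratio k ih.ne']
      exact div_pos (real_inner_self_pos.2 (hGk k)) (hT _ (hGk k))
  exact hratio k (hpos k).ne'

end Gradient

lemma OrthonormalBasis.real_inner_eq_sum_repr_mul {ι E : Type*} [Fintype ι]
    [NormedAddCommGroup E] [InnerProductSpace ℝ E] (b : OrthonormalBasis ι ℝ E) (v w : E) :
    ⟪v, w⟫ = ∑ i, b.repr v i * b.repr w i := by
  rw [← b.sum_inner_mul_inner]
  simp only [b.repr_apply_apply, real_inner_comm]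

lemma OrthonormalBasis.norm_sq_eq_sum_sq_repr {ι E : Type*} [Fintype ι]
    [NormedAddCommGroup E] [InnerProductSpace ℝ E] (b : OrthonormalBasis ι ℝ E) (v : E) :
    ‖v‖ ^ 2 = ∑ i, b.repr v i ^ 2 := by
  rw [← real_inner_self_eq_norm_sq, b.real_inner_eq_sum_repr_mul]
  simp only [sq]

section Spectral

variable {ι : Type*} [Fintype ι] [DecidableEq ι] {H : Matrix ι ι ℝ} (hH : H.IsHermitian)

lemma repr_toEuclideanLin_apply (v : EuclideanSpace ℝ ι) (i : ι) :
    hH.eigenvectorBasis.repr (Matrix.toEuclideanLin H v) i =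
      hH.eigenvalues i * hH.eigenvectorBasis.repr v i := by
  have hvec : Matrix.toEuclideanLin H (hH.eigenvectorBasis i) =
      hH.eigenvalues i • hH.eigenvectorBasis i := by
    ext j
    exact congrFun (hH.mulVec_eigenvectorBasis i) j
  rw [OrthonormalBasis.repr_apply_apply, OrthonormalBasis.repr_apply_apply,
    ← Matrix.isSymmetric_toEuclideanLin_iff.2 hH, hvec, real_inner_smul_left]

lemma inner_toEuclideanLin_self_eq_sum (v : EuclideanSpace ℝ ι) :
    ⟪v, Matrix.toEuclideanLin H v⟫ =
      ∑ i, hH.eigenvalues i * hH.eigenvectorBasis.repr v i ^ 2 := by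
  rw [hH.eigenvectorBasis.real_inner_eq_sum_repr_mul]
  exact sum_congr rfl fun i _ => by rw [repr_toEuclideanLin_apply hH]; ring

lemma inner_self_div_inner_toEuclideanLin_self (v : EuclideanSpace ℝ ι) :
    ⟪v, v⟫ / ⟪v, Matrix.toEuclideanLin H v⟫ =
      bbStep hH.eigenvalues (hH.eigenvectorBasis.repr v) := by
  rw [inner_toEuclideanLin_self_eq_sum hH, hH.eigenvectorBasis.real_inner_eq_sum_repr_mul, bbStep]
  simp only [sq]

lemma mul_norm_sq_le_inner_toEuclideanLin_self {l : ℝ} (hl : ∀ i, l ≤ hH.eigenvalues i)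
    (v : EuclideanSpace ℝ ι) : l * ‖v‖ ^ 2 ≤ ⟪v, Matrix.toEuclideanLin H v⟫ := by
  rw [hH.eigenvectorBasis.norm_sq_eq_sum_sq_repr, inner_toEuclideanLin_self_eq_sum hH]
  exact mul_sum_sq_le_sum_mul_sq hl

lemma mul_norm_le_norm_toEuclideanLin {l : ℝ} (hl : ∀ i, l ≤ hH.eigenvalues i)
    (v : EuclideanSpace ℝ ι) : l * ‖v‖ ≤ ‖Matrix.toEuclideanLin H v‖ := by
  rcases (norm_nonneg v).eq_or_lt with hv | hv
  · rw [← hv, mul_zero]; exact norm_nonneg _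
  · refine le_of_mul_le_mul_right ?_ hv
    calc l * ‖v‖ * ‖v‖ = l * ‖v‖ ^ 2 := by ring
      _ ≤ ⟪v, Matrix.toEuclideanLin H v⟫ := mul_norm_sq_le_inner_toEuclideanLin_self hH hl v
      _ ≤ ‖v‖ * ‖Matrix.toEuclideanLin H v‖ := real_inner_le_norm _ _
      _ = ‖Matrix.toEuclideanLin H v‖ * ‖v‖ := mul_comm _ _

lemma isBBSeq_repr {g : ℕ → EuclideanSpace ℝ ι} {α : ℕ → ℝ}
    (hg : ∀ k, g (k + 1) = g k - α k • Matrix.toEuclideanLin H (g k))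
    (hα : ∀ k, α (k + 1) = ⟪g k, g k⟫ / ⟪g k, Matrix.toEuclideanLin H (g k)⟫) :
    IsBBSeq hH.eigenvalues (fun k => hH.eigenvectorBasis.repr (g k)) α where
  succ_apply k i := by
    rw [hg k, map_sub, map_smul, PiLp.sub_apply, PiLp.smul_apply, repr_toEuclideanLin_apply hH,
      smul_eq_mul]
    ring
  step_succ k := by rw [hα k, inner_self_div_inner_toEuclideanLin_self hH]

end Spectral

lemma Matrix.PosDef.iInf_eigenvalues_pos {ι : Type*} [Fintype ι] [DecidableEq ι] [Nonempty ι]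
    {H : Matrix ι ι ℝ} (hH : H.PosDef) : 0 < ⨅ i, hH.1.eigenvalues i := by
  obtain ⟨i, hi⟩ := exists_eq_ciInf_of_finite (f := hH.1.eigenvalues)
  exact (hH.eigenvalues_pos i).trans_eq hi

theorem stmt_3_general {n : ℕ} (hn : 1 ≤ n)
    (H : Matrix (Fin n) (Fin n) ℝ) (hH : H.PosDef)
    (b : EuclideanSpace ℝ (Fin n))
    (G : EuclideanSpace ℝ (Fin n) → EuclideanSpace ℝ (Fin n))
    (hG : ∀ x, G x = Matrix.toEuclideanLin H x + b)
    (xs : EuclideanSpace ℝ (Fin n)) (hxs : Matrix.toEuclideanLin H xs = -b)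
    (κ : ℝ) (hκ : κ = (⨆ i, hH.1.eigenvalues i) / (⨅ i, hH.1.eigenvalues i))
    (x : ℕ → EuclideanSpace ℝ (Fin n)) (α : ℕ → ℝ)
    (hα0 : 0 < α 0)
    (hGk : ∀ k, G (x k) ≠ 0)
    (hstep : ∀ k, x (k + 1) = x k - α k • G (x k))
    (hBB : ∀ k, α (k + 1) =
      ⟪x (k + 1) - x k, x (k + 1) - x k⟫ / ⟪x (k + 1) - x k, G (x (k + 1)) - G (x k)⟫) :
    ∃ C : ℝ, 0 < C ∧ ∀ k : ℕ, ‖x k - xs‖ ≤ C * (1 - 1 / κ) ^ k := by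
  have : Nonempty (Fin n) := ⟨⟨0, hn⟩⟩
  set ev := hH.1.eigenvalues
  set lmin := ⨅ i, ev i
  set lmax := ⨆ i, ev i
  have hml (i : Fin n) : lmin ≤ ev i := ciInf_le (Set.finite_range ev).bddBelow i
  have hmu (i : Fin n) : ev i ≤ lmax := le_ciSup (Set.finite_range ev).bddAbove i
  have h0 : 0 < lmin := hH.iInf_eigenvalues_pos
  have hα := stepsize_succ_eq_inner_div (fun v hv => (mul_pos h0 (by positivity)).trans_le
    (mul_norm_sq_le_inner_toEuclideanLin_self hH.1 hml v)) hG hstep hBB hα0 hGk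
  obtain ⟨C, hC, hsum⟩ := (isBBSeq_repr hH.1 (grad_succ_eq hG hstep) hα).exists_sum_sq_le
    hml hmu h0 fun k => by simpa using hGk k
  have hle : lmin ≤ lmax := (hml ⟨0, hn⟩).trans (hmu _)
  have hθ : 0 ≤ 1 - lmin / lmax := sub_nonneg.2 (div_le_one_of_le₀ hle (h0.le.trans hle))
  refine ⟨√C / lmin, by positivity, fun k => ?_⟩
  have hgrad : ‖G (x k)‖ ≤ √C * (1 - lmin / lmax) ^ k := by
    refine (sq_le_sq₀ (norm_nonneg _) (by positivity)).1 ?_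
    rw [mul_pow, Real.sq_sqrt hC.le, ← pow_mul, mul_comm k, pow_mul,
      hH.1.eigenvectorBasis.norm_sq_eq_sum_sq_repr]
    exact hsum k
  have hdist : Matrix.toEuclideanLin H (x k - xs) = G (x k) := by
    rw [map_sub, hxs, hG, sub_neg_eq_add]
  rw [hκ, one_div_div, div_mul_eq_mul_div, le_div_iff₀ h0, mul_comm]
  exact (hdist ▸ mul_norm_le_norm_toEuclideanLin hH.1 hml (x k - xs)).trans hgrad

/-- R-linear convergence of the long Barzilai–Borwein gradient method on a
strongly convex quadratic with rate `1 - 1/κ`, `κ = λ_max(H)/λ_min(H)`. -/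
theorem stmt_3 {n : ℕ} (hn : 1 ≤ n)
    (H : Matrix (Fin n) (Fin n) ℝ) (hH : H.PosDef)
    (b : EuclideanSpace ℝ (Fin n))
    (f : EuclideanSpace ℝ (Fin n) → ℝ)
    (hf : ∀ x, f x = (1 / 2) * ⟪x, Matrix.toEuclideanLin H x⟫ + ⟪b, x⟫)
    (G : EuclideanSpace ℝ (Fin n) → EuclideanSpace ℝ (Fin n))
    (hG : ∀ x, G x = Matrix.toEuclideanLin H x + b)
    (xs : EuclideanSpace ℝ (Fin n)) (hxs : Matrix.toEuclideanLin H xs = -b)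
    (κ : ℝ) (hκ : κ = (⨆ i, hH.1.eigenvalues i) / (⨅ i, hH.1.eigenvalues i))
    (x : ℕ → EuclideanSpace ℝ (Fin n)) (α : ℕ → ℝ)
    (hα0 : 0 < α 0)
    (hGk : ∀ k, G (x k) ≠ 0)
    (hstep : ∀ k, x (k + 1) = x k - α k • G (x k))
    (hBB : ∀ k, α (k + 1) =
      ⟪x (k + 1) - x k, x (k + 1) - x k⟫ / ⟪x (k + 1) - x k, G (x (k + 1)) - G (x k)⟫) :
    ∃ C : ℝ, 0 < C ∧ ∀ k : ℕ, ‖x k - xs‖ ≤ C * (1 - 1 / κ) ^ k :=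
  stmt_3_general hn H hH b G hG xs hxs κ hκ x α hα0 hGk hstep hBB
end

section
/- Let n ≥ 1, H ∈ ℝ^{n×n} be symmetric positive definite with positive definite square root H^{1/2}, b ∈ ℝⁿ, f(x) = (1/2)xᵀHx + bᵀx with gradient G(x) = Hx + b, and define φ(w) = (1/2)wᵀHw + (H^{1/2}b)ᵀw with gradient Φ(w) = Hw + H^{1/2}b. Let (x_k) and positive steps (α_k) satisfy x_{k+1} = x_k − α_k G(x_k), and set w_k = H^{1/2} x_k. Then (i) w_{k+1} = w_k − α_k Φ(w_k) for all k; and (ii) for every k with x_{k+1} ≠ x_k, the short Barzilai–Borwein step for (x_k) with respect to f equals the long Barzilai–Borwein step for (w_k) with respect to φ: (s_kᵀ y_k)/(y_kᵀ y_k) = (z_kᵀ z_k)/(z_kᵀ (Φ(w_{k+1}) − Φ(w_k))), where s_k = x_{k+1} − x_k, y_k = G(x_{k+1}) − G(x_k), z_k = w_{k+1} − w_k. -/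
open scoped RealInnerProductSpace

/-!
With `w = M x` for a symmetric square root `M` of `H`, gradient steps commute with `M` because
`M` commutes with `H = M²`. For the difference `s` of two iterates, the differences are
`y = H s`, `z = M s` and `Φ(w') - Φ(w) = H z`, and symmetry of `M` gives
`⟪s, H s⟫ = ⟪M s, M s⟫` and `⟪H s, H s⟫ = ⟪M s, H (M s)⟫`: the numerator and denominator of
the short Barzilai–Borwein step for `x` are those of the long one for `w`.
-/

noncomputable def bbShortStep {E : Type*} [NormedAddCommGroup E] [InnerProductSpace ℝ E]
    (s y : E) : ℝ :=
  ⟪s, y⟫ / ⟪y, y⟫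

noncomputable def bbLongStep {E : Type*} [NormedAddCommGroup E] [InnerProductSpace ℝ E]
    (s y : E) : ℝ :=
  ⟪s, s⟫ / ⟪s, y⟫

theorem LinearMap.map_sub_smul_mul_self_add {R E : Type*} [CommSemiring R] [AddCommGroup E]
    [Module R E] (M : E →ₗ[R] E) (α : R) (x b : E) :
    M (x - α • ((M * M) x + b)) = M x - α • ((M * M) (M x) + M b) := by
  simp only [map_sub, map_smul, map_add, Module.End.mul_apply]

namespace LinearMap.IsSymmetric

variable {E : Type*} [NormedAddCommGroup E] [InnerProductSpace ℝ E] {M : E →ₗ[ℝ] E}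

theorem inner_apply_apply_self (hM : M.IsSymmetric) (s : E) :
    ⟪M s, M s⟫ = ⟪s, (M * M) s⟫ :=
  hM s (M s)

theorem inner_apply_mul_self_apply (hM : M.IsSymmetric) (s : E) :
    ⟪M s, (M * M) (M s)⟫ = ⟪(M * M) s, (M * M) s⟫ :=
  (hM (M s) (M (M s))).symm

theorem bbShortStep_mul_self_eq_bbLongStep (hM : M.IsSymmetric) (s : E) :
    bbShortStep s ((M * M) s) = bbLongStep (M s) ((M * M) (M s)) := by
  rw [bbShortStep, bbLongStep, hM.inner_apply_apply_self, hM.inner_apply_mul_self_apply]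

end LinearMap.IsSymmetric

theorem stmt_5_general {n : ℕ}
    (H R : Matrix (Fin n) (Fin n) ℝ) (hR : R.PosDef) (hRR : R * R = H)
    (b : EuclideanSpace ℝ (Fin n))
    (G : EuclideanSpace ℝ (Fin n) → EuclideanSpace ℝ (Fin n))
    (hG : ∀ x, G x = Matrix.toEuclideanLin H x + b)
    (Φ : EuclideanSpace ℝ (Fin n) → EuclideanSpace ℝ (Fin n))
    (hΦ : ∀ w, Φ w = Matrix.toEuclideanLin H w + Matrix.toEuclideanLin R b)
    (x : ℕ → EuclideanSpace ℝ (Fin n)) (α : ℕ → ℝ)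
    (hstep : ∀ k, x (k + 1) = x k - α k • G (x k))
    (w : ℕ → EuclideanSpace ℝ (Fin n))
    (hw : ∀ k, w k = Matrix.toEuclideanLin R (x k)) :
    (∀ k, w (k + 1) = w k - α k • Φ (w k)) ∧
      ∀ k, x (k + 1) ≠ x k →
        ⟪x (k + 1) - x k, G (x (k + 1)) - G (x k)⟫ /
            ⟪G (x (k + 1)) - G (x k), G (x (k + 1)) - G (x k)⟫ =
          ⟪w (k + 1) - w k, w (k + 1) - w k⟫ /
            ⟪w (k + 1) - w k, Φ (w (k + 1)) - Φ (w k)⟫ := by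
  set M := Matrix.toEuclideanLin R
  have hMM : M * M = Matrix.toEuclideanLin H := hRR ▸ (Matrix.toLpLin_mul_same 2 R R).symm
  have hM : M.IsSymmetric := Matrix.isSymmetric_toEuclideanLin_iff.mpr hR.isHermitian
  rw [← hMM] at hG hΦ
  refine ⟨fun k => ?_, fun k _ => ?_⟩
  · rw [hw, hw, hstep, hΦ, hG, M.map_sub_smul_mul_self_add]
  · have hGsub : G (x (k + 1)) - G (x k) = (M * M) (x (k + 1) - x k) := by
      rw [hG, hG, add_sub_add_right_eq_sub, map_sub]
    have hwsub : w (k + 1) - w k = M (x (k + 1) - x k) := by rw [hw, hw, map_sub]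
    have hΦsub : Φ (w (k + 1)) - Φ (w k) = (M * M) (M (x (k + 1) - x k)) := by
      rw [hΦ, hΦ, add_sub_add_right_eq_sub, ← map_sub, hwsub]
    rw [hGsub, hΦsub, hwsub]
    exact hM.bbShortStep_mul_self_eq_bbLongStep _

/-- Via the change of variables `w = H^{1/2} x`, the short Barzilai–Borwein
step for `f(x) = (1/2)xᵀHx + bᵀx` equals the long Barzilai–Borwein step for the quadratic
`φ(w) = (1/2)wᵀHw + (H^{1/2}b)ᵀw`, whose gradient is `Φ(w) = Hw + H^{1/2}b`. -/
theorem stmt_5 {n : ℕ} (hn : 1 ≤ n)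
    (H R : Matrix (Fin n) (Fin n) ℝ) (hH : H.PosDef) (hR : R.PosDef) (hRR : R * R = H)
    (b : EuclideanSpace ℝ (Fin n))
    (f : EuclideanSpace ℝ (Fin n) → ℝ)
    (hf : ∀ x, f x = (1 / 2) * ⟪x, Matrix.toEuclideanLin H x⟫ + ⟪b, x⟫)
    (G : EuclideanSpace ℝ (Fin n) → EuclideanSpace ℝ (Fin n))
    (hG : ∀ x, G x = Matrix.toEuclideanLin H x + b)
    (φ : EuclideanSpace ℝ (Fin n) → ℝ)
    (hφ : ∀ w, φ w = (1 / 2) * ⟪w, Matrix.toEuclideanLin H w⟫ +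
      ⟪Matrix.toEuclideanLin R b, w⟫)
    (Φ : EuclideanSpace ℝ (Fin n) → EuclideanSpace ℝ (Fin n))
    (hΦ : ∀ w, Φ w = Matrix.toEuclideanLin H w + Matrix.toEuclideanLin R b)
    (x : ℕ → EuclideanSpace ℝ (Fin n)) (α : ℕ → ℝ)
    (hα : ∀ k, 0 < α k)
    (hstep : ∀ k, x (k + 1) = x k - α k • G (x k))
    (w : ℕ → EuclideanSpace ℝ (Fin n))
    (hw : ∀ k, w k = Matrix.toEuclideanLin R (x k)) :
    (∀ k, w (k + 1) = w k - α k • Φ (w k)) ∧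
      ∀ k, x (k + 1) ≠ x k →
        ⟪x (k + 1) - x k, G (x (k + 1)) - G (x k)⟫ /
            ⟪G (x (k + 1)) - G (x k), G (x (k + 1)) - G (x k)⟫ =
          ⟪w (k + 1) - w k, w (k + 1) - w k⟫ /
            ⟪w (k + 1) - w k, Φ (w (k + 1)) - Φ (w k)⟫ :=
  stmt_5_general H R hR hRR b G hG Φ hΦ x α hstep w hw
end

section
/- Let f : ℝⁿ → ℝ be twice continuously differentiable with vᵀ∇²f(y)v ≤ Λ₁‖v‖² for all y, v ∈ ℝⁿ, where Λ₁ > 0. Fix x ∈ ℝⁿ with G(x) = ∇f(x) ≠ 0, a constant η with 0 < η < 1/3, and an initial trial step α > 0. Define Δτ₀ = α and, as long as the sufficient-decrease condition fails (i.e. f(x − Δτ_k G(x)) > f(x) − η Δτ_k ‖G(x)‖²), set Δτ_{k+1} = K0(x; x, Δτ_k); in this case the radicand 3 + 24(f(x̃_k) − f(x))/(Δτ_k(‖G(x) + G(x̃_k)‖² + 4‖G(x)‖²)) with x̃_k = x − Δτ_k G(x) is at least 3(1 − 2η) > 0, so K0 is well defined. Then there exists an integer p ≥ 0 such that f(x −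 Δτ_p G(x)) ≤ f(x) − η Δτ_p ‖G(x)‖². -/
/-!
While sufficient decrease fails at a step `t`, the failed test `f(x̃) - f(x) > -η t ‖G x‖²` and
`‖G x + G x̃‖² + 4‖G x‖² ≥ 4‖G x‖²` bound the radicand of `K0` below by `3 - 6η`, so each
backtracking step shrinks `t` by at least the factor `√(3 - 6η) > 1`. On the other hand the
Hessian bound gives the descent inequality `f(x - tG) ≤ f(x) - t‖G‖² + Λ₁ t² ‖G‖² / 2`, so
sufficient decrease holds as soon as `Λ₁ t ≤ 2(1 - η)`, which a geometrically shrinking step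
eventually reaches.
-/

open scoped RealInnerProductSpace

/-- The Regime-0 KGD step-size
`K0(x; x, α) = α / √(3 + 24(f(x̃) − f(x)) / (α(‖G(x) + G(x̃)‖² + 4‖G(x)‖²)))`
with `x̃ = x − α G(x)`. -/
noncomputable def K0 {n : ℕ} (f : EuclideanSpace ℝ (Fin n) → ℝ)
    (G : EuclideanSpace ℝ (Fin n) → EuclideanSpace ℝ (Fin n))
    (x : EuclideanSpace ℝ (Fin n)) (α : ℝ) : ℝ :=
  α / Real.sqrt (3 + 24 * (f (x - α • G x) - f x) /
      (α * (‖G x + G (x - α • G x)‖ ^ 2 + 4 * ‖G x‖ ^ 2)))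

theorem le_add_deriv_add_half_of_deriv2_le {g g' g'' : ℝ → ℝ} {C : ℝ}
    (hg : ∀ s, HasDerivAt g (g' s) s) (hg' : ∀ s, HasDerivAt g' (g'' s) s)
    (hC : ∀ s, g'' s ≤ C) :
    g 1 ≤ g 0 + g' 0 + C / 2 := by
  have hslope : ∀ s, 0 ≤ s → g' s ≤ g' 0 + C * s := by
    have hanti : Antitone fun s => g' s - C * s :=
      antitone_of_hasDerivAt_nonpos (fun s => (hg' s).sub ((hasDerivAt_id s).const_mul C))
        (fun s => by simpa using hC s)
    intro s hs
    linarith [hanti hs]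
  have hderiv : ∀ s, HasDerivAt (fun s => g s - s * g' 0 - C / 2 * s ^ 2)
      (g' s - g' 0 - C * s) s := fun s => by
    refine (((hg s).sub ((hasDerivAt_id' s).mul_const (g' 0))).sub
      ((hasDerivAt_pow 2 s).const_mul (C / 2))).congr_deriv ?_
    push_cast
    ring
  have hanti : AntitoneOn (fun s => g s - s * g' 0 - C / 2 * s ^ 2) (Set.Ici 0) :=
    antitoneOn_of_hasDerivWithinAt_nonpos (convex_Ici 0)
      (HasDerivAt.continuousOn fun s _ => hderiv s) (fun s _ => (hderiv s).hasDerivWithinAt)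
      fun s hs => by
        rw [interior_Ici] at hs
        linarith [hslope s (le_of_lt hs)]
  have := hanti Set.self_mem_Ici (Set.mem_Ici.2 zero_le_one) zero_le_one
  norm_num at this
  linarith

section
variable {E : Type*} [NormedAddCommGroup E] [InnerProductSpace ℝ E]

theorem hasDerivAt_const_add_smul (y v : E) (s : ℝ) :
    HasDerivAt (fun s : ℝ => y + s • v) v s := by
  simpa using ((hasDerivAt_id s).smul_const v).const_add y

variable [CompleteSpace E] {f : E → ℝ}

theorem ContDiff.gradient {m n : WithTop ℕ∞} (hf : ContDiff ℝ n f) (hmn : m + 1 ≤ n) :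
    ContDiff ℝ m (gradient f) :=
  (InnerProductSpace.toDual ℝ E).symm.toContinuousLinearEquiv.contDiff.comp
    (hf.fderiv_right hmn)

theorem HasGradientAt.hasDerivAt_comp_const_add_smul {f' y v : E} {s : ℝ}
    (h : HasGradientAt f f' (y + s • v)) :
    HasDerivAt (fun s : ℝ => f (y + s • v)) ⟪f', v⟫ s :=
  (hasGradientAt_iff_hasFDerivAt.1 h).comp_hasDerivAt (f := fun s : ℝ => y + s • v) s
    (hasDerivAt_const_add_smul y v s)

theorem le_add_inner_gradient_add_of_inner_fderiv_gradient_le (hf : Differentiable ℝ f)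
    (hg : Differentiable ℝ (gradient f)) {L : ℝ}
    (hL : ∀ y v : E, ⟪v, fderiv ℝ (gradient f) y v⟫ ≤ L * ‖v‖ ^ 2) (y v : E) :
    f (y + v) ≤ f y + ⟪gradient f y, v⟫ + L * ‖v‖ ^ 2 / 2 := by
  have h1 : ∀ s : ℝ, HasDerivAt (fun s : ℝ => f (y + s • v)) ⟪gradient f (y + s • v), v⟫ s :=
    fun s => (hf _).hasGradientAt.hasDerivAt_comp_const_add_smul
  have h2 : ∀ s : ℝ, HasDerivAt (fun s : ℝ => ⟪gradient f (y + s • v), v⟫)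
      ⟪fderiv ℝ (gradient f) (y + s • v) v, v⟫ s := fun s => by
    simpa using ((hg _).hasFDerivAt.comp_hasDerivAt s (hasDerivAt_const_add_smul y v s)).inner ℝ
      (hasDerivAt_const s v)
  have := le_add_deriv_add_half_of_deriv2_le h1 h2 fun s => by
    rw [real_inner_comm]; exact hL _ _
  simpa using this

theorem sufficient_decrease_of_mul_le (hf : Differentiable ℝ f)
    (hg : Differentiable ℝ (gradient f)) {L : ℝ}
    (hL : ∀ y v : E, ⟪v, fderiv ℝ (gradient f) y v⟫ ≤ L * ‖v‖ ^ 2) (x : E) {η t : ℝ}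
    (ht : 0 ≤ t) (hLt : L * t ≤ 2 * (1 - η)) :
    f (x - t • gradient f x) ≤ f x - η * t * ‖gradient f x‖ ^ 2 := by
  have h := le_add_inner_gradient_add_of_inner_fderiv_gradient_le hf hg hL x (-(t • gradient f x))
  rw [← sub_eq_add_neg, inner_neg_right, real_inner_smul_right, real_inner_self_eq_norm_sq,
    norm_neg, norm_smul, mul_pow, Real.norm_eq_abs, sq_abs] at h
  nlinarith [mul_le_mul_of_nonneg_right hLt (mul_nonneg ht (sq_nonneg ‖gradient f x‖))]
end

section
variable {n : ℕ} (f : EuclideanSpace ℝ (Fin n) → ℝ)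
  (G : EuclideanSpace ℝ (Fin n) → EuclideanSpace ℝ (Fin n)) (x : EuclideanSpace ℝ (Fin n))
  {η t : ℝ}

theorem three_sub_six_mul_le_K0_radicand (hη : 0 ≤ η) (ht : 0 < t) (hG : G x ≠ 0)
    (hfail : f x - η * t * ‖G x‖ ^ 2 < f (x - t • G x)) :
    3 - 6 * η ≤ 3 + 24 * (f (x - t • G x) - f x) /
      (t * (‖G x + G (x - t • G x)‖ ^ 2 + 4 * ‖G x‖ ^ 2)) := by
  have hGx : 0 < ‖G x‖ ^ 2 := by positivity
  have hD : 4 * ‖G x‖ ^ 2 ≤ ‖G x + G (x - t • G x)‖ ^ 2 + 4 * ‖G x‖ ^ 2 := by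
    linarith [sq_nonneg ‖G x + G (x - t • G x)‖]
  have : -(6 * η) ≤ 24 * (f (x - t • G x) - f x) /
      (t * (‖G x + G (x - t • G x)‖ ^ 2 + 4 * ‖G x‖ ^ 2)) := by
    rw [le_div_iff₀ (by positivity)]
    nlinarith [mul_nonneg (mul_nonneg hη ht.le) (sub_nonneg.2 hD)]
  linarith

theorem K0_mem_Ioc (hη0 : 0 ≤ η) (hη : η < 1 / 2) (ht : 0 < t) (hG : G x ≠ 0)
    (hfail : f x - η * t * ‖G x‖ ^ 2 < f (x - t • G x)) :
    K0 f G x t ∈ Set.Ioc 0 (t / √(3 - 6 * η)) := by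
  have hr := three_sub_six_mul_le_K0_radicand f G x hη0 ht hG hfail
  have hc : 0 < √(3 - 6 * η) := Real.sqrt_pos.2 (by linarith)
  exact ⟨div_pos ht (hc.trans_le (Real.sqrt_le_sqrt hr)),
    div_le_div_of_nonneg_left ht.le hc (Real.sqrt_le_sqrt hr)⟩
end

theorem stmt_6_general {n : ℕ} (f : EuclideanSpace ℝ (Fin n) → ℝ) (hf : ContDiff ℝ 2 f)
    (Λ₁ : ℝ)
    (hupper : ∀ y v : EuclideanSpace ℝ (Fin n),
      ⟪v, fderiv ℝ (gradient f) y v⟫ ≤ Λ₁ * ‖v‖ ^ 2)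
    (x : EuclideanSpace ℝ (Fin n)) (hGx : gradient f x ≠ 0)
    (η : ℝ) (hη0 : 0 < η) (hη : η < 1 / 3)
    (α : ℝ) (hα : 0 < α)
    (Δτ : ℕ → ℝ) (h0 : Δτ 0 = α)
    (hrec : ∀ k, f x - η * Δτ k * ‖gradient f x‖ ^ 2 < f (x - Δτ k • gradient f x) →
      Δτ (k + 1) = K0 f (gradient f) x (Δτ k)) :
    ∃ p : ℕ, f (x - Δτ p • gradient f x) ≤ f x - η * Δτ p * ‖gradient f x‖ ^ 2 := by
  by_contra! hfail
  set c := √(3 - 6 * η)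
  have hc : 1 < c := Real.lt_sqrt_of_sq_lt (by linarith)
  have hdecay : ∀ k, 0 < Δτ k ∧ Δτ k ≤ α / c ^ k := by
    intro k
    induction k with
    | zero => simp [h0, hα]
    | succ k ih =>
      obtain ⟨hpos, hle⟩ := K0_mem_Ioc f (gradient f) x hη0.le (by linarith) ih.1 hGx (hfail k)
      rw [hrec k (hfail k)]
      refine ⟨hpos, hle.trans ?_⟩
      rw [pow_succ, ← div_div]
      gcongr
      exact ih.2
  have hsmall : Filter.Tendsto (fun k : ℕ => |Λ₁| * (α / c ^ k)) Filter.atTop (nhds 0) := by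
    simpa using (tendsto_const_nhds.div_atTop (tendsto_pow_atTop_atTop_of_one_lt hc)).const_mul |Λ₁|
  obtain ⟨k, hk⟩ := (hsmall.eventually (gt_mem_nhds (by linarith : (0 : ℝ) < 2 * (1 - η)))).exists
  have hstep : Λ₁ * Δτ k ≤ 2 * (1 - η) := calc
    Λ₁ * Δτ k ≤ |Λ₁| * (α / c ^ k) :=
      (mul_le_mul_of_nonneg_right (le_abs_self Λ₁) (hdecay k).1.le).trans
        (mul_le_mul_of_nonneg_left (hdecay k).2 (abs_nonneg Λ₁))
    _ ≤ 2 * (1 - η) := hk.le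
  exact (hfail k).not_ge <| sufficient_decrease_of_mul_le (hf.differentiable (by norm_num))
    ((hf.gradient le_rfl).differentiable one_ne_zero) hupper x (hdecay k).1.le hstep

/-- Finite termination of the Regime-0 KGD backtracking: iterating
`Δτ_{k+1} = K0(x; x, Δτ_k)` while sufficient decrease fails eventually produces a step
satisfying the sufficient-decrease condition. -/
theorem stmt_6 {n : ℕ} (f : EuclideanSpace ℝ (Fin n) → ℝ) (hf : ContDiff ℝ 2 f)
    (Λ₁ : ℝ) (hΛ₁ : 0 < Λ₁)
    (hupper : ∀ y v : EuclideanSpace ℝ (Fin n),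
      ⟪v, fderiv ℝ (gradient f) y v⟫ ≤ Λ₁ * ‖v‖ ^ 2)
    (x : EuclideanSpace ℝ (Fin n)) (hGx : gradient f x ≠ 0)
    (η : ℝ) (hη0 : 0 < η) (hη : η < 1 / 3)
    (α : ℝ) (hα : 0 < α)
    (Δτ : ℕ → ℝ) (h0 : Δτ 0 = α)
    (hrec : ∀ k, f x - η * Δτ k * ‖gradient f x‖ ^ 2 < f (x - Δτ k • gradient f x) →
      Δτ (k + 1) = K0 f (gradient f) x (Δτ k)) :
    ∃ p : ℕ, f (x - Δτ p • gradient f x) ≤ f x - η * Δτ p * ‖gradient f x‖ ^ 2 :=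
  stmt_6_general f hf Λ₁ hupper x hGx η hη0 hη α hα Δτ h0 hrec
end

section
/- Let f : ℝⁿ → ℝ, x ∈ ℝⁿ with G(x) = ∇f(x) ≠ 0, Δτ > 0, and 0 < η < 1/3, and set x̃ = x − Δτ G(x). If f(x̃) ≥ f(x) − η Δτ ‖G(x)‖², then 3 + 24(f(x̃) − f(x))/(Δτ(‖G(x) + G(x̃)‖² + 4‖G(x)‖²)) ≥ 3(1 − 2η) > 0, and consequently the Regime-0 KGD step-size satisfies K0(x; x, Δτ) ≤ Δτ / √(3(1 − 2η)). -/
/-!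
When sufficient decrease fails, `f(x̃) − f(x) ≥ −η Δτ ‖G(x)‖²`, and `4‖G(x)‖²` is at most the
bracket `‖G(x) + G(x̃)‖² + 4‖G(x)‖²`, so the quotient in the radicand is at least `−6η`.
Taking square roots then turns the lower bound on the radicand into the upper bound on `K0`.
-/

open scoped RealInnerProductSpace

theorem three_mul_one_sub_two_mul_le_radicand {τ η g A f₀ f₁ : ℝ} (hτ : 0 ≤ τ) (hη : 0 ≤ η)
    (hg : 0 ≤ g) (hA : 0 ≤ A) (hfail : f₀ - η * τ * g ≤ f₁) :
    3 * (1 - 2 * η) ≤ 3 + 24 * (f₁ - f₀) / (τ * (A + 4 * g)) := by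
  suffices -(6 * η) ≤ 24 * (f₁ - f₀) / (τ * (A + 4 * g)) by linarith
  rcases (mul_nonneg hτ (by positivity : 0 ≤ A + 4 * g)).eq_or_lt with hD | hD
  · rw [← hD, div_zero]
    linarith
  · rw [le_div_iff₀ hD]
    nlinarith [mul_nonneg (mul_nonneg hη hτ) hA]

theorem stmt_7_general {n : ℕ} (f : EuclideanSpace ℝ (Fin n) → ℝ)
    (x : EuclideanSpace ℝ (Fin n))
    (Δτ : ℝ) (hΔτ : 0 < Δτ)
    (η : ℝ) (hη0 : 0 < η) (hη : η < 1 / 3)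
    (hfail : f x - η * Δτ * ‖gradient f x‖ ^ 2 ≤ f (x - Δτ • gradient f x)) :
    3 * (1 - 2 * η) ≤ 3 + 24 * (f (x - Δτ • gradient f x) - f x) /
        (Δτ * (‖gradient f x + gradient f (x - Δτ • gradient f x)‖ ^ 2 +
          4 * ‖gradient f x‖ ^ 2)) ∧
      0 < 3 * (1 - 2 * η) ∧
      K0 f (gradient f) x Δτ ≤ Δτ / Real.sqrt (3 * (1 - 2 * η)) := by
  have hpos : 0 < 3 * (1 - 2 * η) := by linarith
  have of_radicand_le (r : ℝ) (hr : 3 * (1 - 2 * η) ≤ r) :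
      3 * (1 - 2 * η) ≤ r ∧ 0 < 3 * (1 - 2 * η) ∧ Δτ / √r ≤ Δτ / √(3 * (1 - 2 * η)) :=
    ⟨hr, hpos, div_le_div_of_nonneg_left hΔτ.le (Real.sqrt_pos.2 hpos) (Real.sqrt_le_sqrt hr)⟩
  exact of_radicand_le _ <|
    three_mul_one_sub_two_mul_le_radicand hΔτ.le hη0.le (sq_nonneg _) (sq_nonneg _) hfail

/-- If the sufficient-decrease condition fails at a trial step `Δτ`, then the
radicand in the Regime-0 KGD step-size is at least `3(1 − 2η) > 0`, and consequently
`K0(x; x, Δτ) ≤ Δτ / √(3(1 − 2η))`. -/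
theorem stmt_7 {n : ℕ} (f : EuclideanSpace ℝ (Fin n) → ℝ)
    (x : EuclideanSpace ℝ (Fin n)) (hGx : gradient f x ≠ 0)
    (Δτ : ℝ) (hΔτ : 0 < Δτ)
    (η : ℝ) (hη0 : 0 < η) (hη : η < 1 / 3)
    (hfail : f x - η * Δτ * ‖gradient f x‖ ^ 2 ≤ f (x - Δτ • gradient f x)) :
    3 * (1 - 2 * η) ≤ 3 + 24 * (f (x - Δτ • gradient f x) - f x) /
        (Δτ * (‖gradient f x + gradient f (x - Δτ • gradient f x)‖ ^ 2 +
          4 * ‖gradient f x‖ ^ 2)) ∧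
      0 < 3 * (1 - 2 * η) ∧
      K0 f (gradient f) x Δτ ≤ Δτ / Real.sqrt (3 * (1 - 2 * η)) :=
  stmt_7_general f x Δτ hΔτ η hη0 hη hfail
end

section
/- There exist real numbers 0 < a < b and coefficients c₁, c₂, c₃ ∈ ℝ such that the function f : ℝ → ℝ defined by f(x) = (x − b)² for x ≤ −a, f(x) = c₁x⁴ + c₂x² + c₃ for −a < x < a, and f(x) = (x + b)² for x ≥ a is continuously differentiable, and the long-KGD gradient iteration x_{k+1} = x_k − α_k f'(x_k), α_{k+1} = K1(x_{k+1}; x_k, α_k) starting from x₁ = −a with α₁ = 1/2 is well defined with f'(x_k) ≠ 0 for all k and is 4-periodic: x₁ = −a, x₂ = b, x₃ = a, x₄ = −b, and x_{k+4} = x_k for all k ≥ 1; in particular the iteration does not converge. -/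
/-!
Take `b = 1` and `f = kgdCycleFun a`, whose middle piece `((a + 1) / a) x² + (a + 1)` matches
the value and the slope of `(x ∓ 1)²` at `∓a`. As `f` is even, `f'` is odd, and the KGD step
commutes with `(x, α) ↦ (-x, α)`, so only half of the cycle has to be computed:
`(-a, 1/2) ↦ (1, (1 - a)/4) ↦ (a, 1/2)`. The first step lands at `1` for every `a`, and the step
size it produces is the `(1 - a)/4` needed to land at `a` next exactly when `a³ + 3a² + 7a = 3`;
this cubic has a root in `(0, 1)`. A non-constant periodic sequence does not converge.
-/

open Filter Set

theorem hasDerivAt_of_eqOn_Iic_of_eqOn_Ici {F g h g' h' : ℝ → ℝ} {c : ℝ}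
    (hFg : EqOn F g (Iic c)) (hFh : EqOn F h (Ici c))
    (hg : ∀ x, HasDerivAt g (g' x) x) (hh : ∀ x, HasDerivAt h (h' x) x)
    (hc : g' c = h' c) (x : ℝ) :
    HasDerivAt F (if x ≤ c then g' x else h' x) x := by
  rcases lt_trichotomy x c with hx | rfl | hx
  · rw [if_pos hx.le]
    exact (hg x).congr_of_eventuallyEq <|
      eventually_of_mem (Iio_mem_nhds hx) fun y hy => hFg (Iio_subset_Iic_self hy)
  · rw [if_pos le_rfl]
    have hleft := (hg x).hasDerivWithinAt.congr hFg (hFg self_mem_Iic)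
    have hright := (hc ▸ hh x).hasDerivWithinAt.congr hFh (hFh self_mem_Ici)
    simpa using hleft.union hright
  · rw [if_neg hx.not_ge]
    exact (hh x).congr_of_eventuallyEq <|
      eventually_of_mem (Ioi_mem_nhds hx) fun y hy => hFh (Ioi_subset_Ici_self hy)

theorem Function.Periodic.eq_of_tendsto {X : Type*} [TopologicalSpace X] [T2Space X]
    {u : ℕ → X} {p : ℕ} (hu : Function.Periodic u p) (hp : 0 < p) {l : X}
    (hl : Tendsto u atTop (nhds l)) (n : ℕ) : u n = l := by
  have hshift : Tendsto (fun m : ℕ => n + m * p) atTop atTop :=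
    tendsto_atTop_mono (fun m => (Nat.le_mul_of_pos_right m hp).trans (Nat.le_add_left _ _))
      tendsto_id
  have hconst : u ∘ (fun m : ℕ => n + m * p) = fun _ => u n := funext fun m => hu.nat_mul m n
  exact tendsto_nhds_unique (hconst ▸ tendsto_const_nhds) (hl.comp hshift)

-- `kgdStep f (x, α) = (x_new, K1(x_new; x, α))`
noncomputable def kgdStep (f : ℝ → ℝ) (p : ℝ × ℝ) : ℝ × ℝ :=
  let x' := p.1 - p.2 * deriv f p.1
  (x', p.2 / (2 + 2 * (f x' - f p.1) / (p.2 * deriv f p.1 ^ 2)))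

noncomputable def kgdOrbit (f : ℝ → ℝ) (p : ℝ × ℝ) (k : ℕ) : ℝ × ℝ := (kgdStep f)^[k] p

theorem kgdOrbit_succ (f : ℝ → ℝ) (p : ℝ × ℝ) (k : ℕ) :
    kgdOrbit f p (k + 1) = kgdStep f (kgdOrbit f p k) :=
  Function.iterate_succ_apply' _ _ _

theorem Function.IsPeriodicPt.periodic_kgdOrbit {f : ℝ → ℝ} {p : ℝ × ℝ} {n : ℕ}
    (h : Function.IsPeriodicPt (kgdStep f) n p) : Function.Periodic (kgdOrbit f p) n :=
  fun k => by rw [kgdOrbit, Function.iterate_add_apply, h.eq, kgdOrbit]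

theorem kgdStep_neg_of_even {f : ℝ → ℝ} (hf : ∀ x, f (-x) = f x) (x α : ℝ) :
    kgdStep f (-x, α) = (-(kgdStep f (x, α)).1, (kgdStep f (x, α)).2) := by
  have hodd : deriv f (-x) = -deriv f x := by
    have h := deriv_comp_neg (f := f) (x := x)
    simp only [hf] at h
    rw [h, neg_neg]
  simp only [kgdStep, hodd, ← neg_add', hf]
  ring_nf

-- The shape of the statement with `b = 1`, `c₁ = 0`, `c₂ = (a + 1) / a` and `c₃ = a + 1`.
noncomputable def kgdCycleFun (a : ℝ) : ℝ → ℝ := fun x =>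
  if x ≤ -a then (x - 1) ^ 2
  else if x < a then 0 * x ^ 4 + (a + 1) / a * x ^ 2 + (a + 1)
  else (x + 1) ^ 2

section kgdCycleFun

variable {a : ℝ}

theorem kgdCycleFun_neg (ha : 0 < a) (x : ℝ) : kgdCycleFun a (-x) = kgdCycleFun a x := by
  unfold kgdCycleFun
  split_ifs <;> first | (exfalso; linarith) | ring

theorem hasDerivAt_kgdCycleFun (ha : 0 < a) (x : ℝ) :
    HasDerivAt (kgdCycleFun a)
      (if x ≤ -a then 2 * (x - 1) else if x ≤ a then 2 * (a + 1) / a * x else 2 * (x + 1)) x := by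
  have hmid : ∀ y, HasDerivAt (fun z : ℝ => 0 * z ^ 4 + (a + 1) / a * z ^ 2 + (a + 1))
      (2 * (a + 1) / a * y) y := fun y => by
    refine ((((hasDerivAt_pow 4 y).const_mul 0).fun_add
      ((hasDerivAt_pow 2 y).const_mul ((a + 1) / a))).add_const (a + 1)).congr_deriv ?_
    ring
  have hright : ∀ y, HasDerivAt (fun z : ℝ => (z + 1) ^ 2) (2 * (y + 1)) y := fun y => by
    simpa using ((hasDerivAt_id y).add_const 1).fun_pow 2
  have hleft : ∀ y, HasDerivAt (fun z : ℝ => (z - 1) ^ 2) (2 * (y - 1)) y := fun y => by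
    simpa using ((hasDerivAt_id y).sub_const 1).fun_pow 2
  have hinner := hasDerivAt_of_eqOn_Iic_of_eqOn_Ici (c := a)
    (F := fun z => if z < a then 0 * z ^ 4 + (a + 1) / a * z ^ 2 + (a + 1) else (z + 1) ^ 2)
    (fun y (hy : y ≤ a) => by
      rcases hy.lt_or_eq with hy | rfl
      · exact if_pos hy
      · simp only [lt_irrefl, if_false]; field_simp; ring)
    (fun y (hy : a ≤ y) => if_neg hy.not_gt) hmid hright (by field_simp)
  refine hasDerivAt_of_eqOn_Iic_of_eqOn_Ici (fun y (hy : y ≤ -a) => if_pos hy)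
    (fun y (hy : -a ≤ y) => ?_) hleft hinner ?_ x
  · rcases hy.lt_or_eq with hy | rfl
    · exact if_neg hy.not_ge
    · simp only [le_refl, if_true, if_pos (neg_lt_self ha)]; field_simp; ring
  · simp only [if_pos (neg_le_self ha.le)]; field_simp; ring

theorem deriv_kgdCycleFun (ha : 0 < a) :
    deriv (kgdCycleFun a) = fun x =>
      if x ≤ -a then 2 * (x - 1) else if x ≤ a then 2 * (a + 1) / a * x else 2 * (x + 1) :=
  funext fun x => (hasDerivAt_kgdCycleFun ha x).deriv

theorem contDiff_kgdCycleFun (ha : 0 < a) : ContDiff ℝ 1 (kgdCycleFun a) := by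
  refine contDiff_one_iff_deriv.2 ⟨fun x => (hasDerivAt_kgdCycleFun ha x).differentiableAt, ?_⟩
  rw [deriv_kgdCycleFun ha]
  refine Continuous.if_le (by fun_prop) ?_ continuous_id continuous_const fun x hx => ?_
  · refine Continuous.if_le (by fun_prop) (by fun_prop) continuous_id continuous_const
      fun x hx => ?_
    subst hx; field_simp
  · subst hx; rw [if_pos (neg_le_self ha.le)]; field_simp; ring

theorem kgdStep_kgdCycleFun_neg (ha : 0 < a) (ha1 : a < 1)
    (hcubic : a ^ 3 + 3 * a ^ 2 + 7 * a = 3) :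
    kgdStep (kgdCycleFun a) (-a, 1 / 2) = (1, (1 - a) / 4) := by
  have hd : deriv (kgdCycleFun a) (-a) = -2 * (a + 1) := by
    simp only [deriv_kgdCycleFun ha, le_refl, if_true]; ring
  have hx : -a - 1 / 2 * deriv (kgdCycleFun a) (-a) = 1 := by rw [hd]; ring
  have hf₀ : kgdCycleFun a (-a) = (a + 1) ^ 2 := by
    rw [kgdCycleFun, if_pos le_rfl]; ring
  have hf₁ : kgdCycleFun a 1 = 4 := by
    rw [kgdCycleFun, if_neg (by linarith), if_neg (by linarith)]; norm_num
  rw [kgdStep]; dsimp only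
  rw [hx, hf₀, hf₁, hd, Prod.mk.injEq]
  refine ⟨rfl, ?_⟩
  field_simp
  rw [show 2 * (a + 1) ^ 2 + (4 - (a + 1) ^ 2) = (a + 1) ^ 2 + 4 by ring,
    div_eq_iff (by positivity)]
  linear_combination 2 * hcubic

theorem kgdStep_kgdCycleFun_one (ha : 0 < a) (ha1 : a < 1) :
    kgdStep (kgdCycleFun a) (1, (1 - a) / 4) = (a, 1 / 2) := by
  have hd : deriv (kgdCycleFun a) 1 = 4 := by
    simp only [deriv_kgdCycleFun ha, if_neg (show ¬(1 : ℝ) ≤ -a by linarith),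
      if_neg ha1.not_ge]
    norm_num
  have hx : 1 - (1 - a) / 4 * deriv (kgdCycleFun a) 1 = a := by rw [hd]; ring
  have hfa : kgdCycleFun a a = (a + 1) ^ 2 := by
    rw [kgdCycleFun, if_neg (by linarith), if_neg (lt_irrefl a)]
  have hf₁ : kgdCycleFun a 1 = 4 := by
    rw [kgdCycleFun, if_neg (by linarith), if_neg (by linarith)]; norm_num
  have h1a : 1 - a ≠ 0 := by linarith
  rw [kgdStep]; dsimp only
  rw [hx, hfa, hf₁, hd, Prod.mk.injEq]
  refine ⟨rfl, ?_⟩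
  have hden : 2 + 2 * ((a + 1) ^ 2 - 4) / ((1 - a) / 4 * 4 ^ 2) = (1 - a) / 2 := by
    field_simp
    ring
  rw [hden]
  field_simp
  norm_num

theorem kgdStep_kgdCycleFun_self (ha : 0 < a) (ha1 : a < 1)
    (hcubic : a ^ 3 + 3 * a ^ 2 + 7 * a = 3) :
    kgdStep (kgdCycleFun a) (a, 1 / 2) = (-1, (1 - a) / 4) := by
  have h := kgdStep_neg_of_even (kgdCycleFun_neg ha) (-a) (1 / 2)
  rwa [neg_neg, kgdStep_kgdCycleFun_neg ha ha1 hcubic] at h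

theorem kgdStep_kgdCycleFun_neg_one (ha : 0 < a) (ha1 : a < 1) :
    kgdStep (kgdCycleFun a) (-1, (1 - a) / 4) = (-a, 1 / 2) := by
  rw [kgdStep_neg_of_even (kgdCycleFun_neg ha), kgdStep_kgdCycleFun_one ha ha1]

theorem isPeriodicPt_kgdStep_kgdCycleFun (ha : 0 < a) (ha1 : a < 1)
    (hcubic : a ^ 3 + 3 * a ^ 2 + 7 * a = 3) :
    Function.IsPeriodicPt (kgdStep (kgdCycleFun a)) 4 (-1, (1 - a) / 4) := by
  show (kgdStep (kgdCycleFun a))^[4] _ = _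
  simp only [Function.iterate_succ_apply', Function.iterate_zero_apply,
    kgdStep_kgdCycleFun_neg_one ha ha1, kgdStep_kgdCycleFun_neg ha ha1 hcubic,
    kgdStep_kgdCycleFun_one ha ha1, kgdStep_kgdCycleFun_self ha ha1 hcubic]

theorem deriv_kgdCycleFun_ne_zero (ha : 0 < a) {x : ℝ} (hx : x ≠ 0) :
    deriv (kgdCycleFun a) x ≠ 0 := by
  simp only [deriv_kgdCycleFun ha]
  split_ifs
  · linarith
  · exact mul_ne_zero (by positivity) hx
  · linarith

theorem kgdOrbit_kgdCycleFun_one (ha : 0 < a) (ha1 : a < 1) :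
    kgdOrbit (kgdCycleFun a) (-1, (1 - a) / 4) 1 = (-a, 1 / 2) :=
  kgdStep_kgdCycleFun_neg_one ha ha1

theorem kgdOrbit_kgdCycleFun_two (ha : 0 < a) (ha1 : a < 1)
    (hcubic : a ^ 3 + 3 * a ^ 2 + 7 * a = 3) :
    kgdOrbit (kgdCycleFun a) (-1, (1 - a) / 4) 2 = (1, (1 - a) / 4) := by
  rw [kgdOrbit_succ, kgdOrbit_kgdCycleFun_one ha ha1, kgdStep_kgdCycleFun_neg ha ha1 hcubic]

theorem kgdOrbit_kgdCycleFun_three (ha : 0 < a) (ha1 : a < 1)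
    (hcubic : a ^ 3 + 3 * a ^ 2 + 7 * a = 3) :
    kgdOrbit (kgdCycleFun a) (-1, (1 - a) / 4) 3 = (a, 1 / 2) := by
  rw [kgdOrbit_succ, kgdOrbit_kgdCycleFun_two ha ha1 hcubic, kgdStep_kgdCycleFun_one ha ha1]

theorem kgdOrbit_kgdCycleFun_fst_ne_zero (ha : 0 < a) (ha1 : a < 1)
    (hcubic : a ^ 3 + 3 * a ^ 2 + 7 * a = 3) (k : ℕ) :
    (kgdOrbit (kgdCycleFun a) (-1, (1 - a) / 4) k).1 ≠ 0 := by
  have hperiodic := (isPeriodicPt_kgdStep_kgdCycleFun ha ha1 hcubic).periodic_kgdOrbit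
  rw [← hperiodic.map_mod_nat]
  have hk : k % 4 < 4 := Nat.mod_lt _ (by norm_num)
  interval_cases k % 4
  · simp [kgdOrbit]
  · simp [kgdOrbit_kgdCycleFun_one ha ha1, ha.ne']
  · simp [kgdOrbit_kgdCycleFun_two ha ha1 hcubic]
  · simp [kgdOrbit_kgdCycleFun_three ha ha1 hcubic, ha.ne']

end kgdCycleFun

theorem exists_cubic_root_mem_Ioo : ∃ a : ℝ, 0 < a ∧ a < 1 ∧ a ^ 3 + 3 * a ^ 2 + 7 * a = 3 := by
  obtain ⟨a, ⟨ha0, ha1⟩, ha⟩ := intermediate_value_Ioo (zero_le_one' ℝ)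
    (f := fun t : ℝ => t ^ 3 + 3 * t ^ 2 + 7 * t) (by fun_prop)
    (show (3 : ℝ) ∈ Ioo (0 ^ 3 + 3 * 0 ^ 2 + 7 * 0) (1 ^ 3 + 3 * 1 ^ 2 + 7 * 1) by norm_num)
  exact ⟨a, ha0, ha1, ha⟩

/-- There is a piecewise-defined continuously differentiable function on ℝ
for which the long-KGD gradient iteration starting from `x₁ = −a` with `α₁ = 1/2` is well
defined and cycles 4-periodically through `−a, b, a, −b`; in particular it does not
converge. -/
theorem stmt_10 :
    ∃ (a b c₁ c₂ c₃ : ℝ), 0 < a ∧ a < b ∧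
      ∃ f : ℝ → ℝ,
        (∀ x : ℝ, f x = if x ≤ -a then (x - b) ^ 2
          else if x < a then c₁ * x ^ 4 + c₂ * x ^ 2 + c₃
          else (x + b) ^ 2) ∧
        ContDiff ℝ 1 f ∧
        ∃ (x : ℕ → ℝ) (α : ℕ → ℝ),
          x 1 = -a ∧ α 1 = 1 / 2 ∧
          (∀ k, 1 ≤ k → deriv f (x k) ≠ 0) ∧
          (∀ k, 1 ≤ k → x (k + 1) = x k - α k * deriv f (x k)) ∧
          (∀ k, 1 ≤ k → α (k + 1) =
            α k / (2 + 2 * (f (x (k + 1)) - f (x k)) / (α k * deriv f (x k) ^ 2))) ∧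
          x 2 = b ∧ x 3 = a ∧ x 4 = -b ∧
          (∀ k, 1 ≤ k → x (k + 4) = x k) ∧
          ¬ ∃ l : ℝ, Tendsto x atTop (nhds l) := by
  obtain ⟨a, ha, ha1, hcubic⟩ := exists_cubic_root_mem_Ioo
  set orbit := kgdOrbit (kgdCycleFun a) (-1, (1 - a) / 4)
  have hsucc : ∀ k, orbit (k + 1) = kgdStep (kgdCycleFun a) (orbit k) := kgdOrbit_succ _ _
  have hperiodic : Function.Periodic (fun k => (orbit k).1) 4 :=
    (isPeriodicPt_kgdStep_kgdCycleFun ha ha1 hcubic).periodic_kgdOrbit.comp Prod.fst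
  have h₁ : orbit 1 = (-a, 1 / 2) := kgdOrbit_kgdCycleFun_one ha ha1
  have h₂ : orbit 2 = (1, (1 - a) / 4) := kgdOrbit_kgdCycleFun_two ha ha1 hcubic
  have h₃ : orbit 3 = (a, 1 / 2) := kgdOrbit_kgdCycleFun_three ha ha1 hcubic
  refine ⟨a, 1, 0, (a + 1) / a, a + 1, ha, ha1, kgdCycleFun a, fun _ => rfl,
    contDiff_kgdCycleFun ha, fun k => (orbit k).1, fun k => (orbit k).2,
    by simp [h₁], by simp [h₁],
    fun k _ => deriv_kgdCycleFun_ne_zero ha (kgdOrbit_kgdCycleFun_fst_ne_zero ha ha1 hcubic k),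
    fun k _ => congrArg Prod.fst (hsucc k), fun k _ => by dsimp only; rw [hsucc]; rfl,
    by simp [h₂], by simp [h₃], hperiodic 0, fun k _ => hperiodic k, ?_⟩
  rintro ⟨l, hl⟩
  have hconst := hperiodic.eq_of_tendsto four_pos hl
  have h₁₂ : -a = 1 := by simpa [h₁, h₂] using (hconst 1).trans (hconst 2).symm
  linarith
end

section
/- Fix n ≥ 1 and constants 0 < Λ₂ ≤ Λ₁. There exists a positive integer N, depending only on Λ₁ and Λ₂ (and the dimension n), with the following property: for every symmetric positive definite H ∈ ℝ^{n×n} satisfying Λ₂‖v‖² ≤ vᵀHv ≤ Λ₁‖v‖² for all v, every x* ∈ ℝⁿ, every starting point x̂₀ ∈ ℝⁿ, and every initial step α̂₀ ∈ [1/Λ₁, 1/Λ₂], the iterates of the long Barzilai–Borwein gradient method applied to the quadratic f̂(x) = (1/2)(x − x*)ᵀH(x − x*) — namely x̂_{j+1} = x̂_j − α̂_j Ĝ(x̂_j) with Ĝ(x) = H(x − x*) and, for j ≥ 1, α̂_j = (ŝ_{j−1}ᵀ ŝ_{j−1})/(ŝ_{j−1}ᵀ ŷ_{j−1}) where ŝ_{j−1}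 = x̂_j − x̂_{j−1}, ŷ_{j−1} = Ĝ(x̂_j) − Ĝ(x̂_{j−1}) (the iteration stopping, i.e. remaining constant, if Ĝ(x̂_j) = 0) — satisfy ‖x̂_j − x*‖ ≤ (1/2)‖x̂₀ − x*‖ for all j ≥ N. -/
/-!
In an orthonormal eigenbasis of `H` the gradient `g_j = H (x_j - x*)` has coordinates with
`μ_{j+1} i = (1 - α_j λ_i) μ_j i`, and `α_{j+1}` is the inverse Rayleigh quotient of `H` at `g_j`,
so it lies in `[1/Λ₁, 1/Λ₂]` and every factor `|1 - α_j λ_i|` is at most `κ = Λ₁ / Λ₂`.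
Induct over the eigenvalues from the bottom. Once the coordinates below `λ_a` carry at most a
third of the mass of `g_j`, the Rayleigh quotient is at least `2 λ_a / 3`, so
`α_{j+1} λ_a ∈ [Λ₂ / Λ₁, 3 / 2]` and the coordinate `a` contracts by `1 - Λ₂ / (2 Λ₁)`;
otherwise `μ_j a` is itself dominated by the small lower coordinates. Either way `μ_j a` becomes
small after a number of steps depending only on `Λ₁`, `Λ₂` and the dimension, which gives
`‖g_j‖ ≤ ε ‖g_0‖` uniformly; finally `Λ₂ ‖x_j - x*‖ ≤ ‖g_j‖` and `‖g_0‖ ≤ Λ₁ ‖x_0 - x*‖`.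
-/

open scoped RealInnerProductSpace

open Finset

theorem le_max_pow_mul_of_le_mul_or_le {u : ℕ → ℝ} {q B : ℝ} (hq₀ : 0 ≤ q) (hq₁ : q ≤ 1)
    (hB : 0 ≤ B) (h : ∀ k, u (k + 1) ≤ q * u k ∨ u (k + 1) ≤ B) (p : ℕ) :
    u p ≤ max B (q ^ p * u 0) := by
  induction p with
  | zero => simp
  | succ p ih =>
    rcases h p with hk | hk
    · calc u (p + 1) ≤ q * max B (q ^ p * u 0) := hk.trans (by gcongr)
        _ = max (q * B) (q ^ (p + 1) * u 0) := by
          rw [mul_max_of_nonneg _ _ hq₀, pow_succ', mul_assoc]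
        _ ≤ max B (q ^ (p + 1) * u 0) := by gcongr; exact mul_le_of_le_one_left hB hq₁
    · exact le_max_of_le_left hk

theorem sq_one_sub_div_two_mul_lt_one {Λ₁ Λ₂ : ℝ} (hΛ₂ : 0 < Λ₂) (hΛ : Λ₂ ≤ Λ₁) :
    (1 - Λ₂ / (2 * Λ₁)) ^ 2 < 1 := by
  have hΛ₁ : 0 < Λ₁ := hΛ₂.trans_le hΛ
  have hpos : 0 < Λ₂ / (2 * Λ₁) := by positivity
  have hle : Λ₂ / (2 * Λ₁) ≤ 1 := (div_le_one (by positivity)).2 (by linarith)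
  exact pow_lt_one₀ (by linarith) (by linarith) two_ne_zero

theorem Finset.exists_mem_erase_forall_le {ι β : Type*} [DecidableEq ι] [LinearOrder β]
    {f : ι → β} {s : Finset ι} (hs : s.Nonempty) (hlow : ∀ i ∈ s, ∀ k ∉ s, f i ≤ f k) :
    ∃ a ∈ s, (∀ i ∉ s.erase a, f a ≤ f i) ∧ ∀ i ∈ s.erase a, ∀ k ∉ s.erase a, f i ≤ f k := by
  obtain ⟨a, has, hmax⟩ := s.exists_max_image f hs
  have ha : ∀ i ∉ s.erase a, f a ≤ f i := fun i hi ↦ by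
    by_cases hia : i = a
    · rw [hia]
    · exact hlow a has i fun his ↦ hi (mem_erase.2 ⟨hia, his⟩)
  exact ⟨a, has, ha, fun i hi k hk ↦ (hmax i (mem_of_mem_erase hi)).trans (ha k hk)⟩

section Spectral

variable {ι : Type*} [Fintype ι] {Λ₁ Λ₂ : ℝ} {lam : ι → ℝ} {μ : ℕ → ι → ℝ} {α : ℕ → ℝ}

/-- The long Barzilai–Borwein iteration in an orthonormal eigenbasis of the Hessian: `lam i` is
the `i`-th eigenvalue, `μ j i` the `i`-th coordinate of the gradient at step `j`, `α j` the
step size. -/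
structure IsSpectralBBIteration (Λ₁ Λ₂ : ℝ) (lam : ι → ℝ) (μ : ℕ → ι → ℝ) (α : ℕ → ℝ) :
    Prop where
  eigenvalue_mem : ∀ i, lam i ∈ Set.Icc Λ₂ Λ₁
  stepSize_mem : ∀ j, α j ∈ Set.Icc (1 / Λ₁) (1 / Λ₂)
  coord_succ : ∀ j i, μ (j + 1) i = (1 - α j * lam i) * μ j i
  stepSize_succ_mul : ∀ j, α (j + 1) * ∑ i, lam i * μ j i ^ 2 = ∑ i, μ j i ^ 2

namespace IsSpectralBBIteration

theorem stepSize_pos (h : IsSpectralBBIteration Λ₁ Λ₂ lam μ α) (hΛ₂ : 0 < Λ₂) [Nonempty ι]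
    (j : ℕ) : 0 < α j := by
  obtain ⟨i⟩ := ‹Nonempty ι›
  have hΛ₁ : 0 < Λ₁ := hΛ₂.trans_le ((h.eigenvalue_mem i).1.trans (h.eigenvalue_mem i).2)
  exact (one_div_pos.2 hΛ₁).trans_le (h.stepSize_mem j).1

theorem abs_one_sub_stepSize_mul_le (h : IsSpectralBBIteration Λ₁ Λ₂ lam μ α)
    (hΛ₂ : 0 < Λ₂) (j : ℕ) (i : ι) : |1 - α j * lam i| ≤ Λ₁ / Λ₂ := by
  have : Nonempty ι := ⟨i⟩
  have hα := (h.stepSize_pos hΛ₂ j).le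
  have hα₂ := (h.stepSize_mem j).2
  obtain ⟨hl₂, hl₁⟩ := h.eigenvalue_mem i
  have hΛ := hl₂.trans hl₁
  have hκ : 1 ≤ Λ₁ / Λ₂ := (one_le_div hΛ₂).2 hΛ
  have hle : α j * lam i ≤ Λ₁ / Λ₂ := by
    calc α j * lam i ≤ 1 / Λ₂ * Λ₁ := mul_le_mul hα₂ hl₁ (hΛ₂.le.trans hl₂) (by positivity)
      _ = Λ₁ / Λ₂ := by ring
  rw [abs_le]
  constructor <;> nlinarith [hΛ₂.le.trans hl₂]

theorem sq_succ_le (h : IsSpectralBBIteration Λ₁ Λ₂ lam μ α) (hΛ₂ : 0 < Λ₂) (j : ℕ) (i : ι) :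
    μ (j + 1) i ^ 2 ≤ (Λ₁ / Λ₂) ^ 2 * μ j i ^ 2 := by
  rw [h.coord_succ, mul_pow, ← sq_abs (1 - _)]
  gcongr
  exact h.abs_one_sub_stepSize_mul_le hΛ₂ j i

theorem sq_le_pow_mul (h : IsSpectralBBIteration Λ₁ Λ₂ lam μ α) (hΛ₂ : 0 < Λ₂) (j : ℕ)
    (i : ι) : μ j i ^ 2 ≤ ((Λ₁ / Λ₂) ^ 2) ^ j * μ 0 i ^ 2 :=
  le_geom (u := fun j ↦ μ j i ^ 2) (by positivity) j fun k _ ↦ h.sq_succ_le hΛ₂ k i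

theorem stepSize_succ_mul_le (h : IsSpectralBBIteration Λ₁ Λ₂ lam μ α) (hΛ₂ : 0 < Λ₂)
    {s : Finset ι} {a : ι} (ha : ∀ i ∉ s, lam a ≤ lam i) {k : ℕ}
    (hs : 3 * ∑ i ∈ s, μ k i ^ 2 ≤ ∑ i, μ k i ^ 2) (hpos : 0 < ∑ i, μ k i ^ 2) :
    α (k + 1) * lam a ≤ 3 / 2 := by
  classical
  have hlam : ∀ i, 0 ≤ lam i := fun i ↦ hΛ₂.le.trans (h.eigenvalue_mem i).1
  have : Nonempty ι := ⟨a⟩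
  have hα := (h.stepSize_pos hΛ₂ (k + 1)).le
  have hcompl : 2 / 3 * ∑ i, μ k i ^ 2 ≤ ∑ i ∈ sᶜ, μ k i ^ 2 := by
    linarith [sum_add_sum_compl s fun i ↦ μ k i ^ 2]
  have hmass : lam a * (2 / 3 * ∑ i, μ k i ^ 2) ≤ ∑ i, lam i * μ k i ^ 2 :=
    calc lam a * (2 / 3 * ∑ i, μ k i ^ 2) ≤ ∑ i ∈ sᶜ, lam a * μ k i ^ 2 := by
          rw [← mul_sum]; exact mul_le_mul_of_nonneg_left hcompl (hlam a)
      _ ≤ ∑ i ∈ sᶜ, lam i * μ k i ^ 2 :=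
          sum_le_sum fun i hi ↦ by gcongr; exact ha i (mem_compl.1 hi)
      _ ≤ ∑ i, lam i * μ k i ^ 2 :=
          sum_le_univ_sum_of_nonneg fun i ↦ mul_nonneg (hlam i) (sq_nonneg _)
  refine le_of_mul_le_mul_right ?_ hpos
  calc α (k + 1) * lam a * ∑ i, μ k i ^ 2
      = 3 / 2 * (α (k + 1) * (lam a * (2 / 3 * ∑ i, μ k i ^ 2))) := by ring
    _ ≤ 3 / 2 * (α (k + 1) * ∑ i, lam i * μ k i ^ 2) := by gcongr
    _ = 3 / 2 * ∑ i, μ k i ^ 2 := by rw [h.stepSize_succ_mul]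

theorem sq_add_two_le (h : IsSpectralBBIteration Λ₁ Λ₂ lam μ α) (hΛ₂ : 0 < Λ₂)
    {s : Finset ι} {a : ι} (ha : ∀ i ∉ s, lam a ≤ lam i) {k : ℕ}
    (hs : 3 * ∑ i ∈ s, μ k i ^ 2 ≤ ∑ i, μ k i ^ 2) :
    μ (k + 2) a ^ 2 ≤ (1 - Λ₂ / (2 * Λ₁)) ^ 2 * μ (k + 1) a ^ 2 := by
  rcases eq_or_ne (μ k a) 0 with h0 | h0
  · simp [h.coord_succ, h0]
  have hpos : 0 < ∑ i, μ k i ^ 2 :=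
    (pow_pos (abs_pos.2 h0) 2).trans_le ((sq_abs _).trans_le
      (single_le_sum (fun i _ ↦ sq_nonneg (μ k i)) (mem_univ a)))
  have hupper := h.stepSize_succ_mul_le hΛ₂ ha hs hpos
  obtain ⟨hl₂, hl₁⟩ := h.eigenvalue_mem a
  have hΛ₁ : 0 < Λ₁ := hΛ₂.trans_le (hl₂.trans hl₁)
  have hlower : Λ₂ / Λ₁ ≤ α (k + 1) * lam a := by
    calc Λ₂ / Λ₁ = 1 / Λ₁ * Λ₂ := by ring
      _ ≤ α (k + 1) * lam a :=
        mul_le_mul (h.stepSize_mem (k + 1)).1 hl₂ hΛ₂.le ((one_div_pos.2 hΛ₁).le.trans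
          (h.stepSize_mem (k + 1)).1)
  have hratio : Λ₂ / Λ₁ ≤ 1 := (div_le_one hΛ₁).2 (hl₂.trans hl₁)
  have habs : |1 - α (k + 1) * lam a| ≤ 1 - Λ₂ / (2 * Λ₁) := by
    have : Λ₂ / (2 * Λ₁) = Λ₂ / Λ₁ / 2 := by ring
    have hr : 0 ≤ Λ₂ / Λ₁ := by positivity
    rw [abs_le, this]
    constructor <;> linarith
  rw [h.coord_succ (k + 1), mul_pow, ← sq_abs (1 - _)]
  gcongr

/-- Once the coordinates `s` below `a` carry relative mass at most `η`, the coordinate `a` either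
contracts by `θ = 1 - Λ₂ / (2 Λ₁)` over a step or is already of relative size `3 κ⁴ η`. -/
theorem sq_le_max (h : IsSpectralBBIteration Λ₁ Λ₂ lam μ α) (hΛ₂ : 0 < Λ₂)
    {s : Finset ι} {a : ι} (ha : ∀ i ∉ s, lam a ≤ lam i) {N₀ : ℕ} {η : ℝ} (hη : 0 ≤ η)
    (hs : ∀ j ≥ N₀, ∑ i ∈ s, μ j i ^ 2 ≤ η * ∑ i, μ 0 i ^ 2) (p : ℕ) :
    μ (N₀ + 1 + p) a ^ 2 ≤ max (3 * (Λ₁ / Λ₂) ^ 4 * η * ∑ i, μ 0 i ^ 2)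
      (((1 - Λ₂ / (2 * Λ₁)) ^ 2) ^ p * (((Λ₁ / Λ₂) ^ 2) ^ (N₀ + 1) * ∑ i, μ 0 i ^ 2)) := by
  obtain ⟨hl₂, hl₁⟩ := h.eigenvalue_mem a
  have hsq_le_sum : ∀ j, μ j a ^ 2 ≤ ∑ i, μ j i ^ 2 :=
    fun j ↦ single_le_sum (fun i _ ↦ sq_nonneg (μ j i)) (mem_univ a)
  refine (le_max_pow_mul_of_le_mul_or_le (u := fun p ↦ μ (N₀ + 1 + p) a ^ 2)
    (q := (1 - Λ₂ / (2 * Λ₁)) ^ 2) (B := 3 * (Λ₁ / Λ₂) ^ 4 * η * ∑ i, μ 0 i ^ 2) (by positivity)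
    ?_ (by positivity) (fun k ↦ ?_) p).trans ?_
  · exact (sq_one_sub_div_two_mul_lt_one hΛ₂ (hl₂.trans hl₁)).le
  · show μ (N₀ + 1 + (k + 1)) a ^ 2 ≤ _ * μ (N₀ + 1 + k) a ^ 2 ∨ μ (N₀ + 1 + (k + 1)) a ^ 2 ≤ _
    rw [show N₀ + 1 + (k + 1) = N₀ + k + 2 by omega, show N₀ + 1 + k = N₀ + k + 1 by omega]
    by_cases hc : 3 * ∑ i ∈ s, μ (N₀ + k) i ^ 2 ≤ ∑ i, μ (N₀ + k) i ^ 2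
    · exact .inl (h.sq_add_two_le hΛ₂ ha hc)
    · right
      push Not at hc
      calc μ (N₀ + k + 2) a ^ 2 ≤ (Λ₁ / Λ₂) ^ 2 * ((Λ₁ / Λ₂) ^ 2 * μ (N₀ + k) a ^ 2) :=
            (h.sq_succ_le hΛ₂ _ a).trans (by gcongr; exact h.sq_succ_le hΛ₂ _ a)
        _ ≤ (Λ₁ / Λ₂) ^ 2 * ((Λ₁ / Λ₂) ^ 2 * (3 * (η * ∑ i, μ 0 i ^ 2))) := by
            gcongr; linarith [hsq_le_sum (N₀ + k), hs (N₀ + k) (by omega)]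
        _ = _ := by ring
  · refine max_le_max le_rfl (mul_le_mul_of_nonneg_left ?_ (by positivity))
    exact (h.sq_le_pow_mul hΛ₂ _ a).trans (by gcongr; exact hsq_le_sum 0)

end IsSpectralBBIteration

theorem exists_forall_ge_sum_sq_le_of_card_eq (hΛ₂ : 0 < Λ₂) (hΛ : Λ₂ ≤ Λ₁) (m : ℕ) {ε : ℝ}
    (hε : 0 < ε) : ∃ N : ℕ, ∀ (lam : ι → ℝ) (μ : ℕ → ι → ℝ) (α : ℕ → ℝ),
      IsSpectralBBIteration Λ₁ Λ₂ lam μ α → ∀ s : Finset ι, #s = m →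
      (∀ i ∈ s, ∀ k ∉ s, lam i ≤ lam k) → ∀ j ≥ N, ∑ i ∈ s, μ j i ^ 2 ≤ ε * ∑ i, μ 0 i ^ 2 := by
  induction m generalizing ε with
  | zero =>
    refine ⟨0, fun lam μ α _ s hs _ j _ ↦ ?_⟩
    rw [card_eq_zero.1 hs, sum_empty]
    exact mul_nonneg hε.le (sum_nonneg fun i _ ↦ sq_nonneg _)
  | succ m ih =>
    have hΛ₁ : 0 < Λ₁ := hΛ₂.trans_le hΛ
    have hκ : 1 ≤ Λ₁ / Λ₂ := (one_le_div hΛ₂).2 hΛ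
    have hθ := sq_one_sub_div_two_mul_lt_one hΛ₂ hΛ
    obtain ⟨N₀, hN₀⟩ := ih (ε := ε / (6 * (Λ₁ / Λ₂) ^ 4)) (by positivity)
    obtain ⟨K, hK⟩ := exists_pow_lt_of_lt_one
      (x := ε / 2 / ((Λ₁ / Λ₂) ^ 2) ^ (N₀ + 1)) (by positivity) hθ
    refine ⟨N₀ + 1 + K, fun lam μ α h s hs hlow j hj ↦ ?_⟩
    classical
    obtain ⟨a, has, ha, hlow'⟩ := exists_mem_erase_forall_le (card_pos.1 (by omega)) hlow
    have hrest := hN₀ lam μ α h (s.erase a) (by rw [card_erase_of_mem has, hs]; rfl) hlow'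
    obtain ⟨p, hp, rfl⟩ : ∃ p, K ≤ p ∧ j = N₀ + 1 + p := ⟨j - (N₀ + 1), by omega, by omega⟩
    have hcoord : μ (N₀ + 1 + p) a ^ 2 ≤ ε / 2 * ∑ i, μ 0 i ^ 2 := by
      refine (h.sq_le_max hΛ₂ ha (by positivity) hrest p).trans (max_le (le_of_eq ?_) ?_)
      · field_simp
        ring
      · calc ((1 - Λ₂ / (2 * Λ₁)) ^ 2) ^ p * (((Λ₁ / Λ₂) ^ 2) ^ (N₀ + 1) * ∑ i, μ 0 i ^ 2)
            ≤ ((1 - Λ₂ / (2 * Λ₁)) ^ 2) ^ K * ((Λ₁ / Λ₂) ^ 2) ^ (N₀ + 1) * ∑ i, μ 0 i ^ 2 := by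
              rw [← mul_assoc]
              have := pow_le_pow_of_le_one (by positivity) hθ.le hp
              gcongr
          _ ≤ ε / 2 * ∑ i, μ 0 i ^ 2 := by
              gcongr
              exact (lt_div_iff₀ (by positivity)).1 hK |>.le
    have hη : ε / (6 * (Λ₁ / Λ₂) ^ 4) ≤ ε / 2 := by
      gcongr
      nlinarith [one_le_pow₀ (n := 4) hκ]
    calc ∑ i ∈ s, μ (N₀ + 1 + p) i ^ 2
        = μ (N₀ + 1 + p) a ^ 2 + ∑ i ∈ s.erase a, μ (N₀ + 1 + p) i ^ 2 :=
          (add_sum_erase s _ has).symm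
      _ ≤ ε / 2 * ∑ i, μ 0 i ^ 2 + ε / 2 * ∑ i, μ 0 i ^ 2 := by
          gcongr
          exact (hrest _ (by omega)).trans (by gcongr)
      _ = ε * ∑ i, μ 0 i ^ 2 := by ring

theorem exists_forall_ge_sum_sq_le (hΛ₂ : 0 < Λ₂) (hΛ : Λ₂ ≤ Λ₁) {ε : ℝ} (hε : 0 < ε) :
    ∃ N : ℕ, ∀ (lam : ι → ℝ) (μ : ℕ → ι → ℝ) (α : ℕ → ℝ),
      IsSpectralBBIteration Λ₁ Λ₂ lam μ α → ∀ j ≥ N, ∑ i, μ j i ^ 2 ≤ ε * ∑ i, μ 0 i ^ 2 := by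
  obtain ⟨N, hN⟩ := exists_forall_ge_sum_sq_le_of_card_eq (ι := ι) hΛ₂ hΛ _ hε
  exact ⟨N, fun lam μ α h ↦ hN lam μ α h univ card_univ fun _ _ k hk ↦ absurd (mem_univ k) hk⟩

end Spectral

section Operator

variable {E : Type*} [NormedAddCommGroup E] [InnerProductSpace ℝ E] {Λ₁ Λ₂ : ℝ}
  {T : E →ₗ[ℝ] E}

theorem mul_norm_le_norm_apply (hT : ∀ v, Λ₂ * ‖v‖ ^ 2 ≤ ⟪v, T v⟫) (v : E) :
    Λ₂ * ‖v‖ ≤ ‖T v‖ := by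
  rcases eq_or_ne v 0 with rfl | hv
  · simp
  refine le_of_mul_le_mul_right ?_ (norm_pos_iff.2 hv)
  calc Λ₂ * ‖v‖ * ‖v‖ = Λ₂ * ‖v‖ ^ 2 := by ring
    _ ≤ ⟪v, T v⟫ := hT v
    _ ≤ ‖v‖ * ‖T v‖ := real_inner_le_norm _ _
    _ = ‖T v‖ * ‖v‖ := mul_comm _ _

theorem inner_self_div_inner_apply_mem_Icc (hΛ₂ : 0 < Λ₂)
    (hT : ∀ v, Λ₂ * ‖v‖ ^ 2 ≤ ⟪v, T v⟫ ∧ ⟪v, T v⟫ ≤ Λ₁ * ‖v‖ ^ 2) {v : E} (hv : v ≠ 0) :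
    ⟪v, v⟫ / ⟪v, T v⟫ ∈ Set.Icc (1 / Λ₁) (1 / Λ₂) := by
  obtain ⟨hlow, hup⟩ := hT v
  have hv2 : 0 < ‖v‖ ^ 2 := by positivity
  have hpos : 0 < ⟪v, T v⟫ := (mul_pos hΛ₂ hv2).trans_le hlow
  have hΛ₁ : 0 < Λ₁ := pos_of_mul_pos_left (hpos.trans_le hup) hv2.le
  rw [real_inner_self_eq_norm_sq]
  constructor
  · rw [div_le_div_iff₀ hΛ₁ hpos]; linarith
  · rw [div_le_div_iff₀ hpos hΛ₂]; linarith

/-- The long Barzilai–Borwein method for the quadratic with Hessian `T` and minimiser `xs`, whose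
gradient at `x j` is `T (x j - xs)`. -/
structure IsLongBBIteration (T : E →ₗ[ℝ] E) (xs : E) (x : ℕ → E) (α : ℕ → ℝ) : Prop where
  iterate_succ : ∀ j, x (j + 1) = x j - α j • T (x j - xs)
  stepSize_succ : ∀ j, T (x j - xs) ≠ 0 → α (j + 1) =
    ⟪x (j + 1) - x j, x (j + 1) - x j⟫ / ⟪x (j + 1) - x j, T (x (j + 1) - xs) - T (x j - xs)⟫
  stepSize_succ_of_eq_zero : ∀ j, T (x j - xs) = 0 → α (j + 1) = α j

namespace IsLongBBIteration

variable {xs : E} {x : ℕ → E} {α : ℕ → ℝ}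

theorem sub_eq (h : IsLongBBIteration T xs x α) (j : ℕ) :
    x (j + 1) - x j = -α j • T (x j - xs) := by
  rw [h.iterate_succ, sub_sub_cancel_left, neg_smul]

theorem apply_sub_succ (h : IsLongBBIteration T xs x α) (j : ℕ) :
    T (x (j + 1) - xs) = T (x j - xs) - α j • T (T (x j - xs)) := by
  rw [h.iterate_succ, sub_right_comm, map_sub, map_smul]

theorem stepSize_succ_eq (h : IsLongBBIteration T xs x α) {j : ℕ} (hα : α j ≠ 0)
    (hg : T (x j - xs) ≠ 0) :
    α (j + 1) = ⟪T (x j - xs), T (x j - xs)⟫ / ⟪T (x j - xs), T (T (x j - xs))⟫ := by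
  rw [h.stepSize_succ j hg, ← map_sub, sub_sub_sub_cancel_right, h.sub_eq, map_smul]
  simp only [real_inner_smul_left, real_inner_smul_right, ← mul_assoc]
  exact mul_div_mul_left _ _ (mul_ne_zero (neg_ne_zero.2 hα) (neg_ne_zero.2 hα))

theorem stepSize_mem_Icc (h : IsLongBBIteration T xs x α) (hΛ₂ : 0 < Λ₂) (hΛ : Λ₂ ≤ Λ₁)
    (hT : ∀ v, Λ₂ * ‖v‖ ^ 2 ≤ ⟪v, T v⟫ ∧ ⟪v, T v⟫ ≤ Λ₁ * ‖v‖ ^ 2)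
    (hα₀ : α 0 ∈ Set.Icc (1 / Λ₁) (1 / Λ₂)) (j : ℕ) : α j ∈ Set.Icc (1 / Λ₁) (1 / Λ₂) := by
  induction j with
  | zero => exact hα₀
  | succ j ih =>
    by_cases hg : T (x j - xs) = 0
    · rwa [h.stepSize_succ_of_eq_zero j hg]
    have hα : α j ≠ 0 := ((one_div_pos.2 (hΛ₂.trans_le hΛ)).trans_le ih.1).ne'
    rw [h.stepSize_succ_eq hα hg]
    exact inner_self_div_inner_apply_mem_Icc hΛ₂ hT hg

theorem stepSize_succ_mul_inner (h : IsLongBBIteration T xs x α) (hΛ₂ : 0 < Λ₂)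
    (hΛ : Λ₂ ≤ Λ₁) (hT : ∀ v, Λ₂ * ‖v‖ ^ 2 ≤ ⟪v, T v⟫ ∧ ⟪v, T v⟫ ≤ Λ₁ * ‖v‖ ^ 2)
    (hα₀ : α 0 ∈ Set.Icc (1 / Λ₁) (1 / Λ₂)) (j : ℕ) :
    α (j + 1) * ⟪T (x j - xs), T (T (x j - xs))⟫ = ⟪T (x j - xs), T (x j - xs)⟫ := by
  by_cases hg : T (x j - xs) = 0
  · simp [hg]
  have hα : α j ≠ 0 :=
    ((one_div_pos.2 (hΛ₂.trans_le hΛ)).trans_le (h.stepSize_mem_Icc hΛ₂ hΛ hT hα₀ j).1).ne'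
  have hpos : 0 < ⟪T (x j - xs), T (T (x j - xs))⟫ :=
    (mul_pos hΛ₂ (pow_pos (norm_pos_iff.2 hg) 2)).trans_le (hT _).1
  rw [h.stepSize_succ_eq hα hg, div_mul_cancel₀ _ hpos.ne']

end IsLongBBIteration

end Operator

theorem OrthonormalBasis.sum_repr_sq {ι E : Type*} [Fintype ι] [NormedAddCommGroup E]
    [InnerProductSpace ℝ E] (b : OrthonormalBasis ι ℝ E) (v : E) :
    ∑ i, b.repr v i ^ 2 = ‖v‖ ^ 2 := by
  simpa only [b.repr_apply_apply] using b.sum_sq_inner_right v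

section Eigenbasis

variable {E : Type*} [NormedAddCommGroup E] [InnerProductSpace ℝ E] [FiniteDimensional ℝ E]
  {Λ₁ Λ₂ : ℝ} {T : E →ₗ[ℝ] E} {n : ℕ}

namespace LinearMap.IsSymmetric

theorem eigenvalues_mem_Icc (hsymm : T.IsSymmetric) (hn : Module.finrank ℝ E = n)
    (hT : ∀ v, Λ₂ * ‖v‖ ^ 2 ≤ ⟪v, T v⟫ ∧ ⟪v, T v⟫ ≤ Λ₁ * ‖v‖ ^ 2) (i : Fin n) :
    hsymm.eigenvalues hn i ∈ Set.Icc Λ₂ Λ₁ := by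
  have h := hT (hsymm.eigenvectorBasis hn i)
  simpa only [hsymm.apply_eigenvectorBasis, real_inner_smul_right, real_inner_self_eq_norm_sq,
    (hsymm.eigenvectorBasis hn).orthonormal.1 i, one_pow, mul_one, RCLike.ofReal_real_eq_id,
    id_eq, Set.mem_Icc] using h

theorem inner_apply_self_eq_sum (hsymm : T.IsSymmetric) (hn : Module.finrank ℝ E = n) (v : E) :
    ⟪v, T v⟫ = ∑ i, hsymm.eigenvalues hn i * (hsymm.eigenvectorBasis hn).repr v i ^ 2 := by
  rw [← (hsymm.eigenvectorBasis hn).sum_inner_mul_inner v (T v)]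
  refine sum_congr rfl fun i _ ↦ ?_
  rw [real_inner_comm, ← OrthonormalBasis.repr_apply_apply, ← OrthonormalBasis.repr_apply_apply,
    hsymm.eigenvectorBasis_apply_self_apply, RCLike.ofReal_real_eq_id, id_eq]
  ring

theorem norm_apply_sq_le (hsymm : T.IsSymmetric) (hΛ₂ : 0 ≤ Λ₂)
    (hT : ∀ v, Λ₂ * ‖v‖ ^ 2 ≤ ⟪v, T v⟫ ∧ ⟪v, T v⟫ ≤ Λ₁ * ‖v‖ ^ 2) (v : E) :
    ‖T v‖ ^ 2 ≤ Λ₁ ^ 2 * ‖v‖ ^ 2 := by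
  set b := hsymm.eigenvectorBasis rfl
  rw [← b.sum_repr_sq, ← b.sum_repr_sq, mul_sum]
  refine sum_le_sum fun i _ ↦ ?_
  obtain ⟨hl₂, hl₁⟩ := hsymm.eigenvalues_mem_Icc rfl hT i
  rw [hsymm.eigenvectorBasis_apply_self_apply, mul_pow, RCLike.ofReal_real_eq_id, id_eq]
  gcongr
  linarith

end LinearMap.IsSymmetric

theorem IsLongBBIteration.isSpectralBBIteration {xs : E} {x : ℕ → E} {α : ℕ → ℝ}
    (h : IsLongBBIteration T xs x α) (hsymm : T.IsSymmetric) (hn : Module.finrank ℝ E = n)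
    (hΛ₂ : 0 < Λ₂) (hΛ : Λ₂ ≤ Λ₁)
    (hT : ∀ v, Λ₂ * ‖v‖ ^ 2 ≤ ⟪v, T v⟫ ∧ ⟪v, T v⟫ ≤ Λ₁ * ‖v‖ ^ 2)
    (hα₀ : α 0 ∈ Set.Icc (1 / Λ₁) (1 / Λ₂)) :
    IsSpectralBBIteration Λ₁ Λ₂ (hsymm.eigenvalues hn)
      (fun j i ↦ (hsymm.eigenvectorBasis hn).repr (T (x j - xs)) i) α where
  eigenvalue_mem := hsymm.eigenvalues_mem_Icc hn hT
  stepSize_mem := h.stepSize_mem_Icc hΛ₂ hΛ hT hα₀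
  coord_succ j i := by
    simp only [h.apply_sub_succ, map_sub, map_smul, PiLp.sub_apply, PiLp.smul_apply, smul_eq_mul,
      hsymm.eigenvectorBasis_apply_self_apply, RCLike.ofReal_real_eq_id, id_eq]
    ring
  stepSize_succ_mul j := by
    rw [← hsymm.inner_apply_self_eq_sum, OrthonormalBasis.sum_repr_sq,
      ← real_inner_self_eq_norm_sq]
    exact h.stepSize_succ_mul_inner hΛ₂ hΛ hT hα₀ j

theorem exists_forall_ge_norm_apply_sq_le (hΛ₂ : 0 < Λ₂) (hΛ : Λ₂ ≤ Λ₁) {ε : ℝ} (hε : 0 < ε) :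
    ∃ N : ℕ, ∀ T : E →ₗ[ℝ] E, T.IsSymmetric →
      (∀ v, Λ₂ * ‖v‖ ^ 2 ≤ ⟪v, T v⟫ ∧ ⟪v, T v⟫ ≤ Λ₁ * ‖v‖ ^ 2) →
      ∀ (xs : E) (x : ℕ → E) (α : ℕ → ℝ), α 0 ∈ Set.Icc (1 / Λ₁) (1 / Λ₂) →
      IsLongBBIteration T xs x α → ∀ j ≥ N, ‖T (x j - xs)‖ ^ 2 ≤ ε * ‖T (x 0 - xs)‖ ^ 2 := by
  obtain ⟨N, hN⟩ := exists_forall_ge_sum_sq_le (ι := Fin (Module.finrank ℝ E)) hΛ₂ hΛ hε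
  refine ⟨N, fun T hsymm hT xs x α hα₀ h j hj ↦ ?_⟩
  simpa only [OrthonormalBasis.sum_repr_sq] using
    hN _ _ _ (h.isSpectralBBIteration hsymm rfl hΛ₂ hΛ hT hα₀) j hj

end Eigenbasis

theorem stmt_16_general (n : ℕ) (Λ₁ Λ₂ : ℝ) (hΛ₂ : 0 < Λ₂) (hΛ : Λ₂ ≤ Λ₁) :
    ∃ N : ℕ, 0 < N ∧
      ∀ (H : Matrix (Fin n) (Fin n) ℝ), H.PosDef →
      (∀ v : EuclideanSpace ℝ (Fin n),
        Λ₂ * ‖v‖ ^ 2 ≤ ⟪v, Matrix.toEuclideanLin H v⟫ ∧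
          ⟪v, Matrix.toEuclideanLin H v⟫ ≤ Λ₁ * ‖v‖ ^ 2) →
      ∀ (xs : EuclideanSpace ℝ (Fin n)) (x : ℕ → EuclideanSpace ℝ (Fin n)) (α : ℕ → ℝ),
        α 0 ∈ Set.Icc (1 / Λ₁) (1 / Λ₂) →
        (∀ j, x (j + 1) = x j - α j • Matrix.toEuclideanLin H (x j - xs)) →
        (∀ j, Matrix.toEuclideanLin H (x j - xs) ≠ 0 →
          α (j + 1) = ⟪x (j + 1) - x j, x (j + 1) - x j⟫ /
            ⟪x (j + 1) - x j,
              Matrix.toEuclideanLin H (x (j + 1) - xs) - Matrix.toEuclideanLin H (x j - xs)⟫) →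
        (∀ j, Matrix.toEuclideanLin H (x j - xs) = 0 → α (j + 1) = α j) →
        ∀ j, N ≤ j → ‖x j - xs‖ ≤ 1 / 2 * ‖x 0 - xs‖ := by
  have hΛ₁ : 0 < Λ₁ := hΛ₂.trans_le hΛ
  obtain ⟨N, hN⟩ := exists_forall_ge_norm_apply_sq_le (E := EuclideanSpace ℝ (Fin n)) hΛ₂ hΛ
    (ε := (Λ₂ / (2 * Λ₁)) ^ 2) (by positivity)
  refine ⟨N + 1, N.succ_pos, fun H hH hT xs x α hα₀ hx hαBB hαstop j hj ↦ ?_⟩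
  have hsymm := Matrix.isSymmetric_toEuclideanLin_iff.2 hH.isHermitian
  have hsq : (Λ₂ * ‖x j - xs‖) ^ 2 ≤ (Λ₂ * (1 / 2 * ‖x 0 - xs‖)) ^ 2 :=
    calc (Λ₂ * ‖x j - xs‖) ^ 2 ≤ ‖Matrix.toEuclideanLin H (x j - xs)‖ ^ 2 := by
          gcongr
          exact mul_norm_le_norm_apply (fun v ↦ (hT v).1) _
      _ ≤ (Λ₂ / (2 * Λ₁)) ^ 2 * ‖Matrix.toEuclideanLin H (x 0 - xs)‖ ^ 2 :=
          hN _ hsymm hT xs x α hα₀ ⟨hx, hαBB, hαstop⟩ j (by omega)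
      _ ≤ (Λ₂ / (2 * Λ₁)) ^ 2 * (Λ₁ ^ 2 * ‖x 0 - xs‖ ^ 2) := by
          gcongr
          exact hsymm.norm_apply_sq_le hΛ₂.le hT _
      _ = (Λ₂ * (1 / 2 * ‖x 0 - xs‖)) ^ 2 := by field_simp
  exact le_of_mul_le_mul_left (pow_le_pow_iff_left₀ (by positivity) (by positivity)
    two_ne_zero |>.1 hsq) hΛ₂

/-- Uniform contraction of the long Barzilai–Borwein gradient method on the
class of quadratics `f̂(x) = (1/2)(x−x*)ᵀH(x−x*)` with `Λ₂‖v‖² ≤ vᵀHv ≤ Λ₁‖v‖²`: there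
is `N`, depending only on `Λ₁, Λ₂` (and the dimension), such that `‖x̂_j − x*‖ ≤
(1/2)‖x̂₀ − x*‖` for all `j ≥ N`. The iteration remains constant once `Ĝ(x̂_j) = 0`
(automatic from the update rule), in which case the step-size is kept constant. -/
theorem stmt_16 (n : ℕ) (hn : 1 ≤ n) (Λ₁ Λ₂ : ℝ) (hΛ₂ : 0 < Λ₂) (hΛ : Λ₂ ≤ Λ₁) :
    ∃ N : ℕ, 0 < N ∧
      ∀ (H : Matrix (Fin n) (Fin n) ℝ), H.PosDef →
      (∀ v : EuclideanSpace ℝ (Fin n),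
        Λ₂ * ‖v‖ ^ 2 ≤ ⟪v, Matrix.toEuclideanLin H v⟫ ∧
          ⟪v, Matrix.toEuclideanLin H v⟫ ≤ Λ₁ * ‖v‖ ^ 2) →
      ∀ (xs : EuclideanSpace ℝ (Fin n)) (x : ℕ → EuclideanSpace ℝ (Fin n)) (α : ℕ → ℝ),
        α 0 ∈ Set.Icc (1 / Λ₁) (1 / Λ₂) →
        (∀ j, x (j + 1) = x j - α j • Matrix.toEuclideanLin H (x j - xs)) →
        (∀ j, Matrix.toEuclideanLin H (x j - xs) ≠ 0 →
          α (j + 1) = ⟪x (j + 1) - x j, x (j + 1) - x j⟫ /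
            ⟪x (j + 1) - x j,
              Matrix.toEuclideanLin H (x (j + 1) - xs) - Matrix.toEuclideanLin H (x j - xs)⟫) →
        (∀ j, Matrix.toEuclideanLin H (x j - xs) = 0 → α (j + 1) = α j) →
        ∀ j, N ≤ j → ‖x j - xs‖ ≤ 1 / 2 * ‖x 0 - xs‖ :=
  stmt_16_general n Λ₁ Λ₂ hΛ₂ hΛ
end
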